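/- arXiv:1509.03787 — 7 statements merged into one kernel-verified Lean document; each statement's English description precedes it below -/
import Mathlib

section
/- Let X ⊆ ℝⁿ be a finite union of closed convex sets and let w ∈ ℝⁿ be a vector such that X + w ⊆ X (i.e., p ∈ X implies p + w ∈ X). Then for every p ∈ X there exists λ₀ ≥ 0 such that p + λ·w ∈ X for all real λ ≥ λ₀. -/
/-- If `X ⊆ ℝⁿ` is a finite union of closed convex sets and `w` is a vector
with `X + w ⊆ X`, then every point of `X` eventually lies on the whole ray in direction `w`:
for every `p ∈ X` there is `λ₀ ≥ 0` such that `p + λ • w ∈ X` for all `λ ≥ λ₀`. -/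
theorem cone_ray_of_finite_union_convex_invariant {n : ℕ}
    (X : Set (Fin n → ℝ)) (w : Fin n → ℝ)
    (𝒞 : Finset (Set (Fin n → ℝ)))
    (hXU : X = ⋃ C ∈ 𝒞, (C : Set (Fin n → ℝ)))
    (hclosed : ∀ C ∈ 𝒞, IsClosed C)
    (hconv : ∀ C ∈ 𝒞, Convex ℝ C)
    (hw : ∀ p ∈ X, p + w ∈ X) :
    ∀ p ∈ X, ∃ lam₀ : ℝ, 0 ≤ lam₀ ∧ ∀ lam : ℝ, lam₀ ≤ lam → p + lam • w ∈ X := by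
  intro p hp
  -- all natural translates are in X
  have hnat : ∀ k : ℕ, p + (k : ℝ) • w ∈ X := by
    intro k
    induction k with
    | zero => simpa using hp
    | succ k ih =>
        have := hw _ ih
        have heq : p + (k : ℝ) • w + w = p + ((k : ℝ) + 1) • w := by
          module
        rw [heq] at this
        push_cast
        exact this
  -- choose for each k a member of 𝒞 containing the translate
  have hchoice : ∀ k : ℕ, ∃ C ∈ 𝒞, p + (k : ℝ) • w ∈ C := by
    intro k
    have := hnat k
    rw [hXU] at this
    simpa using this
  choose f hf𝒞 hfmem using hchoice
  -- pigeonhole: some C ∈ 𝒞 has infinite fiber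
  have : ∃ C : Set (Fin n → ℝ), (f ⁻¹' {C}).Infinite := by
    by_contra h
    push_neg at h
    have : (Set.univ : Set ℕ).Finite := by
      have hsub : (Set.univ : Set ℕ) ⊆ ⋃ C ∈ 𝒞, f ⁻¹' {C} := by
        intro k _
        exact Set.mem_biUnion (hf𝒞 k) rfl
      exact (Set.Finite.biUnion 𝒞.finite_toSet fun C _ => h C).subset hsub
    exact Set.infinite_univ this
  obtain ⟨C, hCinf⟩ := this
  have hC𝒞 : C ∈ 𝒞 := by
    obtain ⟨k, hk⟩ := hCinf.nonempty
    simp only [Set.mem_preimage, Set.mem_singleton_iff] at hk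
    exact hk ▸ hf𝒞 k
  obtain ⟨k₀, hk₀⟩ := hCinf.nonempty
  simp only [Set.mem_preimage, Set.mem_singleton_iff] at hk₀
  have hpk₀ : p + (k₀ : ℝ) • w ∈ C := hk₀ ▸ hfmem k₀
  refine ⟨(k₀ : ℝ), Nat.cast_nonneg _, fun lam hlam => ?_⟩
  -- pick k in the fiber with k > lam
  obtain ⟨k, hkfib, hkgt⟩ := hCinf.exists_gt ⌈lam⌉₊
  simp only [Set.mem_preimage, Set.mem_singleton_iff] at hkfib
  have hpk : p + (k : ℝ) • w ∈ C := hkfib ▸ hfmem k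
  have hlamk : lam < (k : ℝ) := lt_of_le_of_lt (Nat.le_ceil lam) (by exact_mod_cast hkgt)
  have hk₀k : (k₀ : ℝ) < (k : ℝ) := lt_of_le_of_lt hlam hlamk
  set t : ℝ := (lam - k₀) / (k - k₀) with ht
  have hden : (0:ℝ) < (k : ℝ) - k₀ := by linarith
  have ht0 : 0 ≤ t := div_nonneg (by linarith) hden.le
  have ht1 : t ≤ 1 := by
    rw [div_le_one hden]
    linarith
  have hconvC := hconv C hC𝒞
  have hmem := hconvC hpk₀ hpk (by linarith : (0:ℝ) ≤ 1 - t) ht0 (by ring)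
  have hcomb : (1 - t) • (p + (k₀ : ℝ) • w) + t • (p + (k : ℝ) • w) = p + lam • w := by
    have hlameq : (1 - t) * k₀ + t * k = lam := by
      have : t * ((k:ℝ) - k₀) = lam - k₀ := by
        rw [ht, div_mul_cancel₀ _ hden.ne']
      ring_nf
      ring_nf at this
      linarith
    have : ((1 - t) * k₀ + t * k) • w = lam • w := by rw [hlameq]
    calc (1 - t) • (p + (k₀ : ℝ) • w) + t • (p + (k : ℝ) • w)
        = p + ((1 - t) * k₀ + t * k) • w := by module
      _ = p + lam • w := by rw [this]
  rw [hcomb] at hmem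
  rw [hXU]
  exact Set.mem_biUnion hC𝒞 hmem
end

section
/- Let Δ ⊆ ℕ^d be a finite nonempty set and a : Δ → ℝ, and define the tropical polynomial function P : ℝ^d → ℝ by P(x) = min_{I ∈ Δ}(a_I + ⟨I,x⟩). Let V ⊆ Δ be the set of Newton-diagram points of Δ, i.e. V = { I ∈ Δ : there exists w ∈ ℝ^d with all coordinates strictly positive such that ⟨w,I⟩ ≤ ⟨w,J⟩ for every J ∈ Δ }. Then there exists M ∈ ℝ such that for every x ∈ ℝ^d with x_j ≥ M for all j, one has P(x) = min_{I ∈ V}(a_I + ⟨I,x⟩). (Every convergent tropical power series coincides with its normal form, given by the monomials on its Newton diagram, in a neighborhood of ∞.) -/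
/-- `I` is a Newton-diagram point of the finite set `Δ ⊆ ℕ^d` (together with `I ∈ Δ`) if there
is a strictly positive weight vector `w` for which `I` minimizes `⟨w,·⟩` over `Δ`. These are the
points of `Δ` on the compact faces of the Newton polyhedron. -/
def IsNewtonDiagramPoint {d : ℕ} (Δ : Finset (Fin d → ℕ)) (I : Fin d → ℕ) : Prop :=
  ∃ w : Fin d → ℝ, (∀ j, 0 < w j) ∧
    ∀ J ∈ Δ, ∑ j, w j * (I j : ℝ) ≤ ∑ j, w j * (J j : ℝ)

/-! If `I ∈ Δ` is not a Newton-diagram point, Farkas' lemma produces a point `z` of the convex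
hull of `Δ` with `z ≤ I` coordinatewise and `z ≠ I`. For `x` with all coordinates `≥ M` this gives
`min_J (a_J + ⟨J, x⟩) ≤ max a + ⟨z, x⟩ ≤ max a + ⟨I, x⟩ - M ∑ⱼ (Iⱼ - zⱼ)`, so once `M` is large
the monomial of `I` lies strictly above the minimum and can be dropped. Since Newton-diagram
points require strictly positive weights, Farkas' lemma is applied once per coordinate and the
resulting weights are added. It rests on the closedness of finitely generated cones, which
follows from Carathéodory's reduction to linearly independent generators. -/

open Finset Filter

section ConicSpan

variable {ι E : Type*} [AddCommGroup E] [Module ℝ E] (v : ι → E)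

def conicSpan (s : Finset ι) : PointedCone ℝ E where
  carrier := {x | ∃ c : ι → ℝ, (∀ i ∈ s, 0 ≤ c i) ∧ ∑ i ∈ s, c i • v i = x}
  add_mem' := by
    rintro _ _ ⟨c, hc, rfl⟩ ⟨c', hc', rfl⟩
    exact ⟨c + c', fun i hi => add_nonneg (hc i hi) (hc' i hi), by
      simp only [Pi.add_apply, add_smul, sum_add_distrib]⟩
  zero_mem' := ⟨0, fun _ _ => le_rfl, by simp⟩
  smul_mem' := by
    rintro ⟨r, hr⟩ _ ⟨c, hc, rfl⟩
    exact ⟨r • c, fun i hi => mul_nonneg hr (hc i hi), by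
      simp [Nonneg.mk_smul, smul_sum, mul_smul]⟩

variable {v}

theorem mem_conicSpan_of_mem {s : Finset ι} {i : ι} (hi : i ∈ s) : v i ∈ conicSpan v s := by
  classical
  refine ⟨Pi.single i 1, fun j _ => ?_, by simp [Pi.single_apply, hi]⟩
  exact (Pi.single_nonneg.2 zero_le_one : (0 : ι → ℝ) ≤ Pi.single i 1) j

theorem conicSpan_mono {s t : Finset ι} (h : t ⊆ s) : conicSpan v t ≤ conicSpan v s := by
  rintro _ ⟨c, hc, rfl⟩
  exact sum_mem fun i hi => (conicSpan v s).smul_mem (hc i hi) (mem_conicSpan_of_mem (h hi))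

theorem conicSpan_subset_biUnion_erase [DecidableEq ι] {s : Finset ι}
    (h : ¬ LinearIndepOn ℝ v s) :
    (conicSpan v s : Set E) ⊆ ⋃ i ∈ s, (conicSpan v (s.erase i) : Set E) := by
  obtain ⟨g, hg, hgpos⟩ : ∃ g : ι → ℝ, ∑ i ∈ s, g i • v i = 0 ∧ ∃ i ∈ s, 0 < g i := by
    simp only [linearIndepOn_finset_iff, not_forall] at h
    obtain ⟨g, hg, i, hi, hgi⟩ := h
    rcases lt_or_gt_of_ne hgi with hneg | hpos
    · exact ⟨-g, by simp [neg_smul, hg], i, hi, neg_pos.2 hneg⟩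
    · exact ⟨g, hg, i, hi, hpos⟩
  rintro _ ⟨c, hc, rfl⟩
  -- Move `c` against the relation `g` until its first coefficient on `s` vanishes.
  obtain ⟨i₀, hi₀, hmin⟩ := exists_min_image (s.filter (0 < g ·)) (fun i => c i / g i)
    (by obtain ⟨i, hi, hgi⟩ := hgpos; exact ⟨i, mem_filter.2 ⟨hi, hgi⟩⟩)
  obtain ⟨hi₀s, hgi₀⟩ := mem_filter.1 hi₀
  set t := c i₀ / g i₀
  have ht : 0 ≤ t := div_nonneg (hc _ hi₀s) hgi₀.le
  refine Set.mem_biUnion hi₀s ⟨c - t • g, fun i hi => ?_, ?_⟩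
  · have his := mem_of_mem_erase hi
    simp only [Pi.sub_apply, Pi.smul_apply, smul_eq_mul, sub_nonneg]
    rcases le_or_gt (g i) 0 with hgi | hgi
    · nlinarith [hc i his]
    · exact (le_div_iff₀ hgi).1 (hmin i (mem_filter.2 ⟨his, hgi⟩))
  · rw [sum_erase s (by simp [t, div_mul_cancel₀ _ hgi₀.ne'])]
    simp only [Pi.sub_apply, Pi.smul_apply, smul_eq_mul, sub_smul, mul_smul, sum_sub_distrib,
      ← smul_sum, hg, smul_zero, sub_zero]

variable [TopologicalSpace E] [IsTopologicalAddGroup E] [ContinuousSMul ℝ E] [T2Space E]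

theorem isClosed_conicSpan_of_linearIndepOn {s : Finset ι} (h : LinearIndepOn ℝ v s) :
    IsClosed (conicSpan v s : Set E) := by
  classical
  have himage : (conicSpan v s : Set E) =
      Fintype.linearCombination ℝ (fun i : s => v i) '' Set.Ici 0 := by
    ext x
    constructor
    · rintro ⟨c, hc, rfl⟩
      exact ⟨fun i => c i, fun i => hc i i.2, by
        simp [Fintype.linearCombination_apply, sum_attach s (fun i => c i • v i)]⟩
    · rintro ⟨c, hc, rfl⟩
      refine ⟨fun i => if hi : i ∈ s then c ⟨i, hi⟩ else 0,
        fun i hi => by simpa [hi] using hc ⟨i, hi⟩, ?_⟩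
      simp [Fintype.linearCombination_apply, ← sum_attach s]
  rw [himage]
  refine (LinearMap.isClosedEmbedding_of_injective ?_).isClosedMap _ isClosed_Ici
  exact LinearMap.ker_eq_bot.2 (linearIndependent_iff_injective_fintypeLinearCombination.1 h)

variable (v) in
theorem isClosed_conicSpan (s : Finset ι) : IsClosed (conicSpan v s : Set E) := by
  classical
  induction s using Finset.strongInduction with
  | H s ih =>
    by_cases h : LinearIndepOn ℝ v s
    · exact isClosed_conicSpan_of_linearIndepOn h
    · have : (conicSpan v s : Set E) = ⋃ i ∈ s, (conicSpan v (s.erase i) : Set E) :=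
        (conicSpan_subset_biUnion_erase h).antisymm
          (Set.iUnion₂_subset fun i _ => conicSpan_mono (erase_subset i s))
      rw [this]
      exact s.finite_toSet.isClosed_biUnion fun i hi => ih _ (erase_ssubset hi)

theorem exists_dual_nonneg_of_notMem_conicSpan [LocallyConvexSpace ℝ E] {s : Finset ι} {b : E}
    (hb : b ∉ conicSpan v s) : ∃ f : StrongDual ℝ E, (∀ i ∈ s, 0 ≤ f (v i)) ∧ f b < 0 := by
  obtain ⟨f, hf, hfb⟩ :=
    ProperCone.hyperplane_separation_point ⟨conicSpan v s, isClosed_conicSpan v s⟩ hb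
  exact ⟨f, fun i hi => hf _ (mem_conicSpan_of_mem hi), hfb⟩

end ConicSpan

section Weights

variable {d : ℕ}

theorem exists_nonneg_weight_or_exists_mem_convexHull_lt (S : Finset (Fin d → ℝ))
    (y : Fin d → ℝ) (k : Fin d) :
    (∃ u : Fin d → ℝ, 0 ≤ u ∧ 0 < u k ∧ ∀ p ∈ S, u ⬝ᵥ y ≤ u ⬝ᵥ p) ∨
      ∃ z ∈ convexHull ℝ (S : Set (Fin d → ℝ)), z < y := by
  -- Farkas' lemma for `-eₖ` and the cone spanned by the `p - y` and the unit vectors.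
  let v : (Fin d → ℝ) ⊕ Fin d → Fin d → ℝ := Sum.elim (· - y) (Pi.single · 1)
  by_cases hmem : -Pi.single k 1 ∈ conicSpan v (S.disjSum univ)
  · right
    obtain ⟨c, hc, hsum⟩ := hmem
    set C := ∑ p ∈ S, c (.inl p)
    set μ : Fin d → ℝ := fun j => c (.inr j)
    have hμ : 0 ≤ μ := fun j => hc _ (by simp)
    have hμsum : ∑ j, c (.inr j) • (Pi.single j 1 : Fin d → ℝ) = μ := by
      ext m; simp [μ, Pi.single_apply]
    have hcomb : ∑ p ∈ S, c (.inl p) • p = C • y - (μ + Pi.single k 1) := by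
      simp only [sum_disjSum, v, Sum.elim_inl, Sum.elim_inr, smul_sub, sum_sub_distrib,
        ← sum_smul, hμsum] at hsum
      linear_combination (norm := module) hsum
    have hpos : 0 < μ + Pi.single k 1 := add_pos_of_nonneg_of_pos hμ (Pi.single_pos.2 one_pos)
    have hC : 0 < C := by
      refine (sum_nonneg fun p hp => hc _ (by simp [hp]) : 0 ≤ C).lt_of_ne fun hC0 => ?_
      have hzero : ∀ p ∈ S, c (.inl p) = 0 :=
        (sum_eq_zero_iff_of_nonneg fun p hp => hc _ (by simp [hp])).1 hC0.symm
      rw [sum_eq_zero fun p hp => by rw [hzero p hp, zero_smul], show C = 0 from hC0.symm,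
        zero_smul, zero_sub, eq_comm, neg_eq_zero] at hcomb
      exact hpos.ne' hcomb
    refine ⟨S.centerMass (fun p => c (.inl p)) id,
      S.centerMass_mem_convexHull (fun p hp => hc _ (by simp [hp])) hC fun p hp => hp, ?_⟩
    rw [centerMass]
    change C⁻¹ • ∑ p ∈ S, c (.inl p) • p < y
    rw [hcomb, smul_sub, inv_smul_smul₀ hC.ne', sub_lt_self_iff]
    exact smul_pos (inv_pos.2 hC) hpos
  · left
    obtain ⟨f, hf, hfk⟩ := exists_dual_nonneg_of_notMem_conicSpan hmem
    set u : Fin d → ℝ := fun j => f (Pi.single j 1)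
    have hfu : ∀ q, f q = u ⬝ᵥ q := fun q => by
      conv_lhs => rw [pi_eq_sum_univ' q]
      simp [u, dotProduct, mul_comm]
    refine ⟨u, fun j => hf (.inr j) (by simp), by simpa [u] using hfk, fun p hp => ?_⟩
    have := hf (.inl p) (by simp [hp])
    simpa only [v, Sum.elim_inl, hfu, dotProduct_sub, sub_nonneg] using this

theorem exists_mem_convexHull_lt_of_not_exists_pos_weight {S : Finset (Fin d → ℝ)}
    {y : Fin d → ℝ} (h : ¬ ∃ w : Fin d → ℝ, (∀ j, 0 < w j) ∧ ∀ p ∈ S, w ⬝ᵥ y ≤ w ⬝ᵥ p) :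
    ∃ z ∈ convexHull ℝ (S : Set (Fin d → ℝ)), z < y := by
  by_contra hz
  choose u hu₀ huk hu using fun k =>
    (exists_nonneg_weight_or_exists_mem_convexHull_lt S y k).resolve_right hz
  refine h ⟨∑ k, u k, fun j => ?_, fun p hp => ?_⟩
  · rw [Finset.sum_apply]
    exact (huk j).trans_le (single_le_sum (fun k _ => hu₀ k j) (mem_univ j))
  · simp only [sum_dotProduct]
    exact sum_le_sum fun k _ => hu k p hp

theorem eventually_inf'_lt_of_not_isNewtonDiagramPoint {Δ : Finset (Fin d → ℕ)}
    (hΔ : Δ.Nonempty) (a : (Fin d → ℕ) → ℝ) {I : Fin d → ℕ} (hI : ¬ IsNewtonDiagramPoint Δ I) :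
    ∀ᶠ M in atTop, ∀ x : Fin d → ℝ, (∀ j, M ≤ x j) →
      (Δ.inf' hΔ fun J => a J + ∑ j, (J j : ℝ) * x j) < a I + ∑ j, (I j : ℝ) * x j := by
  classical
  let toReal : (Fin d → ℕ) → Fin d → ℝ := fun J j => J j
  obtain ⟨z, hz, hzI⟩ := exists_mem_convexHull_lt_of_not_exists_pos_weight
    (S := Δ.image toReal) (y := toReal I) fun ⟨w, hw, hle⟩ =>
      hI ⟨w, hw, fun J hJ => hle _ (mem_image_of_mem _ hJ)⟩
  obtain ⟨hzI, k, hk⟩ := Pi.lt_def.1 hzI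
  set δ := ∑ j, (toReal I j - z j)
  have hδ : 0 < δ := sum_pos' (fun j _ => sub_nonneg.2 (hzI j)) ⟨k, mem_univ k, sub_pos.2 hk⟩
  filter_upwards [eventually_gt_atTop ((Δ.sup' hΔ a - a I) / δ)] with M hM x hx
  obtain ⟨p, hp, hpz⟩ := (LinearMap.concaveOn (dotProductEquiv ℝ (Fin d) x) convex_univ)
    |>.exists_le_of_mem_convexHull (Set.subset_univ _) hz
  obtain ⟨J, hJ, rfl⟩ := mem_image.1 hp
  have hgap : δ * M ≤ (toReal I - z) ⬝ᵥ x := by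
    rw [sum_mul]
    exact sum_le_sum fun j _ => mul_le_mul_of_nonneg_left (hx j) (sub_nonneg.2 (hzI j))
  rw [div_lt_iff₀ hδ] at hM
  calc (Δ.inf' hΔ fun J => a J + ∑ j, (J j : ℝ) * x j)
      ≤ a J + toReal J ⬝ᵥ x := inf'_le _ hJ
    _ ≤ Δ.sup' hΔ a + z ⬝ᵥ x := by
      simp only [dotProductEquiv_apply_apply] at hpz
      rw [dotProduct_comm, dotProduct_comm z]
      exact add_le_add (le_sup' a hJ) hpz
    _ < a I + toReal I ⬝ᵥ x := by
      rw [sub_dotProduct] at hgap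
      linarith

end Weights

/-- A tropical polynomial function `P(x) = min_{I∈Δ}(a_I + ⟨I,x⟩)` coincides,
on the region where all coordinates are large enough, with the minimum taken only over the
Newton-diagram points of `Δ`. -/
theorem tropical_polynomial_normal_form {d : ℕ}
    (Δ : Finset (Fin d → ℕ)) (hΔ : Δ.Nonempty) (a : (Fin d → ℕ) → ℝ)
    (P : (Fin d → ℝ) → ℝ)
    (hP : ∀ x, P x = Δ.inf' hΔ fun I => a I + ∑ j, (I j : ℝ) * x j)
    (V : Finset (Fin d → ℕ))
    (hV : ∀ I, I ∈ V ↔ I ∈ Δ ∧ IsNewtonDiagramPoint Δ I) :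
    ∃ hV' : V.Nonempty, ∃ M : ℝ, ∀ x : Fin d → ℝ, (∀ j, M ≤ x j) →
      P x = V.inf' hV' fun I => a I + ∑ j, (I j : ℝ) * x j := by
  obtain ⟨M, hM⟩ := ((eventually_all_finset Δ).2 fun I hI =>
    eventually_imp_distrib_left.2 fun (hIV : I ∉ V) =>
      eventually_inf'_lt_of_not_isNewtonDiagramPoint hΔ a fun hN => hIV ((hV I).2 ⟨hI, hN⟩)).exists
  have hmin : ∀ x : Fin d → ℝ, (∀ j, M ≤ x j) → ∃ I ∈ V, P x = a I + ∑ j, (I j : ℝ) * x j := by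
    intro x hx
    obtain ⟨I, hI, hPI⟩ := exists_mem_eq_inf' hΔ fun I => a I + ∑ j, (I j : ℝ) * x j
    exact ⟨I, by_contra fun hIV => (hM I hI hIV x hx).ne hPI, by rw [hP, hPI]⟩
  obtain ⟨I₀, hI₀, -⟩ := hmin (fun _ => M) fun _ => le_rfl
  refine ⟨⟨I₀, hI₀⟩, M, fun x hx => le_antisymm ?_ ?_⟩
  · rw [hP]
    exact inf'_mono _ (fun I hI => ((hV I).1 hI).1) _
  · obtain ⟨I, hI, hPI⟩ := hmin x hx
    rw [hPI]
    exact inf'_le _ hI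
end

section
/- Let φ : ℕ^d → 𝕋 = ℝ ∪ {∞} be the coefficients of a tropical formal power series, defining φ(x) = inf_{I ∈ ℕ^d}(φ_I + ⟨I,x⟩) ∈ 𝕋 for x ∈ ℝ^d. Then the following are equivalent: (i) φ is convergent at ∞, i.e. there exist M ∈ ℝ and a finite subset S ⊆ ℕ^d such that for every x ∈ ℝ^d with x_j ≥ M for all j, inf_{I ∈ ℕ^d}(φ_I + ⟨I,x⟩) = min_{I ∈ S}(φ_I + ⟨I,x⟩); (ii) there exists α ∈ ℝ such that φ_I + α·|I| → ∞ as |I| → ∞, where |I| = I_1 + ⋯ + I_d, i.e. for every C ∈ ℝ only finitely many I ∈ ℕ^d satisfy φ_I + α|I| ≤ C. (This is the criterion, established in the paper's Proposition, characterizing exactly those tropical power series that arise as tropicalizations of convergent analytic germs over a non-archimedean valued field: over such a field a power series Σ φ̂_I x^I converges near 0 if and only if condition (ii) holds for the valuations φ_I = ν₀(φ̂_I).) -/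
/-!
Write `ψ_α(I) = φ_I + α|I|`, so that `φ_I + ⟨I,x⟩ = ψ_α(I) + ⟨I, x - α⟩`.

If the minimum over `S` bounds `φ_I + M|I|` from below by some `r`, then
`φ_I + (M+1)|I| ≤ C` forces `|I| ≤ C - r`, which leaves finitely many `I`.

Conversely, call `I` a record of `ψ_α` if `ψ_α(I) < ψ_α(J)` for every `J < I`. Every `I`
dominates a record `I' ≤ I` with `ψ_α(I') ≤ ψ_α(I)`, and for `x ≥ α` this gives
`φ_{I'} + ⟨I',x⟩ ≤ φ_I + ⟨I,x⟩`. There are only finitely many records: by Dickson's lemma an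
infinite set of them would contain an increasing sequence, along which `ψ_α` strictly
decreases, so it would put infinitely many exponents in one sublevel set.
-/

open Finset Function

section Records

variable {α β : Type*} [PartialOrder α]

def records [LT β] (ψ : α → β) : Set α := {a | ∀ b < a, ψ a < ψ b}

theorem exists_mem_records_le [WellFoundedLT α] [LinearOrder β] (ψ : α → β) (a : α) :
    ∃ a' ∈ records ψ, a' ≤ a ∧ ψ a' ≤ ψ a := by
  obtain ⟨a', ⟨ha'a, hψa'⟩, hmin⟩ :=
    wellFounded_lt.has_min {b | b ≤ a ∧ ψ b ≤ ψ a} ⟨a, le_rfl, le_rfl⟩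
  refine ⟨a', fun b hb => lt_of_not_ge fun hψb => ?_, ha'a, hψa'⟩
  exact hmin b ⟨hb.le.trans ha'a, hψb.trans hψa'⟩ hb

theorem records_finite [WellQuasiOrderedLE α] (ψ : α → WithTop ℝ)
    (hψ : ∀ C : ℝ, {a | ψ a ≤ C}.Finite) : (records ψ).Finite := by
  by_contra hinf
  set e := Set.Infinite.natEmbedding _ hinf
  obtain ⟨g, hg⟩ := wellQuasiOrdered_le.exists_monotone_subseq fun n => (e n : α)
  set h : ℕ → α := fun n => e (g n)
  have h_inj : Injective h := fun m n hmn =>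
    g.injective (e.injective (Subtype.coe_injective hmn))
  have h_strictMono : StrictMono h := Monotone.strictMono_of_injective (hg · ·) h_inj
  have hψh_anti : Antitone (ψ ∘ h) := by
    intro m n hmn
    rcases hmn.eq_or_lt with rfl | hlt
    · exact le_rfl
    · exact ((e (g n)).2 _ (h_strictMono hlt)).le
  obtain ⟨C, hC⟩ :=
    WithTop.ne_top_iff_exists.1 ((e (g 1)).2 _ (h_strictMono zero_lt_one)).ne_top
  exact Set.infinite_of_injective_forall_mem (f := fun k => h (k + 1))
    (h_inj.comp (add_left_injective 1)) (fun k => (hψh_anti (Nat.le_add_left 1 k)).trans hC.ge)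
    (hψ C)

end Records

section Exponents

variable {ι : Type*} [Fintype ι]

theorem finite_setOf_sum_le (N : ℕ) : {I : ι → ℕ | ∑ j, I j ≤ N}.Finite := by
  classical
  exact (Set.finite_Icc 0 fun _ => N).subset fun I hI =>
    ⟨fun j => Nat.zero_le _,
      fun j => (single_le_sum (fun j _ => Nat.zero_le _) (mem_univ j)).trans hI⟩

theorem sum_mul_eq_mul_sum_add_sum_mul_sub (I : ι → ℕ) (x : ι → ℝ) (α : ℝ) :
    ∑ j, (I j : ℝ) * x j = α * ((∑ j, I j : ℕ) : ℝ) + ∑ j, (I j : ℝ) * (x j - α) := by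
  push_cast
  rw [mul_sum, ← sum_add_distrib]
  exact sum_congr rfl fun j _ => by ring

theorem sublevel_finite_of_forall_le (φ : (ι → ℕ) → WithTop ℝ) {r β : ℝ}
    (h : ∀ I, (r : WithTop ℝ) ≤ φ I + ((β * (∑ j, I j : ℕ) : ℝ) : WithTop ℝ)) (C : ℝ) :
    {I : ι → ℕ | φ I + (((β + 1) * (∑ j, I j : ℕ) : ℝ) : WithTop ℝ) ≤ C}.Finite := by
  refine (finite_setOf_sum_le ⌊C - r⌋₊).subset fun I hI => Nat.le_floor ?_
  have hle : ((r + (∑ j, I j : ℕ) : ℝ) : WithTop ℝ) ≤ C :=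
    calc ((r + (∑ j, I j : ℕ) : ℝ) : WithTop ℝ)
        ≤ φ I + ((β * (∑ j, I j : ℕ) : ℝ) : WithTop ℝ)
            + (((∑ j, I j : ℕ) : ℝ) : WithTop ℝ) := by
          rw [WithTop.coe_add]; exact add_le_add (h I) le_rfl
      _ = φ I + (((β + 1) * (∑ j, I j : ℕ) : ℝ) : WithTop ℝ) := by
          rw [add_assoc, ← WithTop.coe_add, add_one_mul]
      _ ≤ C := hI
  linarith [WithTop.coe_le_coe.1 hle]

theorem add_sum_mul_le_of_le (φ : (ι → ℕ) → WithTop ℝ) {α : ℝ} {x : ι → ℝ}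
    (hx : ∀ j, α ≤ x j) {I' I : ι → ℕ} (hle : I' ≤ I)
    (hψ : φ I' + ((α * (∑ j, I' j : ℕ) : ℝ) : WithTop ℝ)
      ≤ φ I + ((α * (∑ j, I j : ℕ) : ℝ) : WithTop ℝ)) :
    φ I' + ((∑ j, (I' j : ℝ) * x j : ℝ) : WithTop ℝ)
      ≤ φ I + ((∑ j, (I j : ℝ) * x j : ℝ) : WithTop ℝ) := by
  simp only [sum_mul_eq_mul_sum_add_sum_mul_sub _ x α, WithTop.coe_add, ← add_assoc]
  refine add_le_add hψ (WithTop.coe_le_coe.2 (sum_le_sum fun j _ => ?_))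
  exact mul_le_mul_of_nonneg_right (by exact_mod_cast hle j) (sub_nonneg.2 (hx j))

end Exponents

/-- A tropical formal power series `φ(x) = inf_{I∈ℕ^d}(φ_I + ⟨I,x⟩)` (values
in `𝕋 = WithTop ℝ`) is convergent at `∞` — i.e. on the region where all coordinates are large
enough, the infimum over all of `ℕ^d` equals the minimum over some fixed finite set `S ⊆ ℕ^d`
(stated as: the minimum over `S` is a lower bound for all the values `φ_I + ⟨I,x⟩`) — if and
only if there is `α ∈ ℝ` such that `φ_I + α·|I| → ∞` as `|I| → ∞`, i.e. for every `C ∈ ℝ`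
only finitely many `I ∈ ℕ^d` satisfy `φ_I + α|I| ≤ C`. -/
theorem tropical_series_convergent_iff {d : ℕ}
    (φ : (Fin d → ℕ) → WithTop ℝ) :
    (∃ M : ℝ, ∃ S : Finset (Fin d → ℕ), ∃ hS : S.Nonempty,
        ∀ x : Fin d → ℝ, (∀ j, M ≤ x j) →
          ∀ I : Fin d → ℕ,
            (S.inf' hS fun I' => φ I' + ((∑ j, (I' j : ℝ) * x j : ℝ) : WithTop ℝ))
              ≤ φ I + ((∑ j, (I j : ℝ) * x j : ℝ) : WithTop ℝ)) ↔
      (∃ α : ℝ, ∀ C : ℝ,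
        {I : Fin d → ℕ |
            φ I + ((α * (∑ j, (I j : ℕ) : ℕ) : ℝ) : WithTop ℝ) ≤ (C : WithTop ℝ)}.Finite) := by
  constructor
  · rintro ⟨M, S, hS, hmin⟩
    set m := S.inf' hS fun I' => φ I' + ((∑ j, (I' j : ℝ) * M : ℝ) : WithTop ℝ)
    refine ⟨M + 1, sublevel_finite_of_forall_le φ (r := m.untopD 0) fun I => ?_⟩
    calc ((m.untopD 0 : ℝ) : WithTop ℝ) ≤ m := WithTop.coe_untopD_le m 0
      _ ≤ φ I + ((∑ j, (I j : ℝ) * M : ℝ) : WithTop ℝ) :=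
        hmin (fun _ => M) (fun _ => le_rfl) I
      _ = φ I + ((M * (∑ j, I j : ℕ) : ℝ) : WithTop ℝ) := by
        rw [sum_mul_eq_mul_sum_add_sum_mul_sub I _ M]; simp
  · rintro ⟨α, hα⟩
    set ψ : (Fin d → ℕ) → WithTop ℝ :=
      fun I => φ I + ((α * (∑ j, I j : ℕ) : ℝ) : WithTop ℝ)
    have hfin := records_finite ψ hα
    refine ⟨α, hfin.toFinset,
      ⟨0, hfin.mem_toFinset.2 fun J hJ => (hJ.not_ge fun j => Nat.zero_le _).elim⟩,
      fun x hx I => ?_⟩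
    obtain ⟨I', hI', hle, hψ⟩ := exists_mem_records_le ψ I
    exact (inf'_le _ (hfin.mem_toFinset.2 hI')).trans (add_sum_mul_le_of_le φ hx hle hψ)
end

section
/- Let f = (f₁, f₂) : 𝕋² → 𝕋² be a tropical polynomial germ without constant terms, f_i(x) = min_{I ∈ Δ_i}(c_{i,I} + ⟨I,x⟩) with Δ_i ⊆ ℕ² ∖ {0} finite and c_{i,I} ∈ ℝ, and let A be its linear-part matrix over 𝕋. Assume f is weakly non-degenerate, i.e. the tropical determinant det_𝕋(A) = (A₁₁+A₂₂) ⊓ (A₁₂+A₂₁) is not ∞. Then there exist M ∈ ℝ, coefficients a₁, a₂, b₁, b₂ ∈ ℝ, and exponents p₁, p₂, q₁, q₂ ∈ ℕ* ∪ {∞} with min(p₁,p₂) = min(q₁,q₂) = min(p₁,q₁) = min(p₂,q₂) = 1, such that for all x = (x₁,x₂) ∈ ℝ² with x₁, x₂ ≥ M, f(x₁,x₂) = ( (a₁ + p₁x₁) ⊓ (a₂ + p₂x₂), (b₁ + q₁x₁) ⊓ (b₂ + q₂x₂) ), where by convention a + p·x ≡ ∞ if p = ∞ (the corresponding monomial is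 absent). (First part of the paper's Proposition on 2-dimensional normal forms, with weak non-degeneracy expressed via the tropical determinant of the linear part.) -/
/-- The tropical monomial `a + p·x` in one real variable, with exponent `p ∈ ℕ ∪ {∞}`:
by convention it is `∞` when `p = ∞`. -/
noncomputable def tropMonomial (a : ℝ) (p : WithTop ℕ) (x : ℝ) : WithTop ℝ :=
  p.map fun n : ℕ => a + (n : ℝ) * x

lemma tropMonomial_one (a x : ℝ) : tropMonomial a 1 x = ((a + x : ℝ) : WithTop ℝ) := by
  have h : tropMonomial a 1 x = ((a + ((1 : ℕ) : ℝ) * x : ℝ) : WithTop ℝ) := rfl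
  rw [h]; norm_num

lemma tropMonomial_top (a x : ℝ) : tropMonomial a ⊤ x = ⊤ := rfl

lemma tropMonomial_coe (a x : ℝ) (n : ℕ) :
    tropMonomial a (n : WithTop ℕ) x = ((a + n * x : ℝ) : WithTop ℝ) := rfl

lemma fin2_cases (j k : Fin 2) : j = k ∨ j = k + 1 := by fin_cases j <;> fin_cases k <;> decide

lemma fin2_succ_ne (k : Fin 2) : k + 1 ≠ k := by fin_cases k <;> decide

lemma sum2 (g : Fin 2 → ℝ) (k : Fin 2) : ∑ j, g j = g k + g (k + 1) := by
  fin_cases k <;> simp [Fin.sum_univ_two] <;> ring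

/-- Key lemma: normal form of one coordinate function, when `e_k ∈ Δ`. -/
lemma key (Δ : Finset (Fin 2 → ℕ)) (hne : Δ.Nonempty) (h0 : (0 : Fin 2 → ℕ) ∉ Δ)
    (c : (Fin 2 → ℕ) → ℝ) (k : Fin 2) (hk : Pi.single k 1 ∈ Δ) :
    ∃ (M a b : ℝ) (p : WithTop ℕ), 1 ≤ p ∧
      ∀ (y : Fin 2 → WithTop ℝ) (x : Fin 2 → ℝ), (∀ j, y j = (x j : WithTop ℝ)) →
        M ≤ x k → M ≤ x (k + 1) →
        (Δ.inf' hne fun I => ((c I : ℝ) : WithTop ℝ) + ∑ j, (I j) • y j)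
          = tropMonomial a 1 (x k) ⊓ tropMonomial b p (x (k + 1)) := by
  classical
  set a := c (Pi.single k 1) with ha
  -- first, a reduction of the WithTop inf' to a real inf'
  have reduce : ∀ (y : Fin 2 → WithTop ℝ) (x : Fin 2 → ℝ), (∀ j, y j = (x j : WithTop ℝ)) →
      (Δ.inf' hne fun I => ((c I : ℝ) : WithTop ℝ) + ∑ j, (I j) • y j)
        = ((Δ.inf' hne fun I => c I + (I k) * x k + (I (k + 1)) * x (k + 1) : ℝ) : WithTop ℝ) := by
    intro y x hy
    rw [Finset.coe_inf', Finset.inf'_eq_inf]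
    apply Finset.inf_congr rfl
    intro I _
    have hterm : ∀ j, (I j) • y j = (((I j : ℝ) * x j : ℝ) : WithTop ℝ) := by
      intro j
      rw [hy j, ← WithTop.coe_nsmul, nsmul_eq_mul]
    have hreal : (I 0 : ℝ) * x 0 + (I 1 : ℝ) * x 1
        = (I k : ℝ) * x k + (I (k + 1) : ℝ) * x (k + 1) := by
      have h := sum2 (fun j => (I j : ℝ) * x j) k
      rwa [Fin.sum_univ_two] at h
    show ((c I : ℝ) : WithTop ℝ) + ∑ j, (I j) • y j
        = ((c I + (I k : ℝ) * x k + (I (k + 1) : ℝ) * x (k + 1) : ℝ) : WithTop ℝ)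
    rw [Fin.sum_univ_two, hterm 0, hterm 1, ← WithTop.coe_add, ← WithTop.coe_add,
      WithTop.coe_eq_coe]
    linarith [hreal]
  -- facts about membership
  have hIk1 : ∀ I ∈ Δ, I k = 0 → 1 ≤ I (k + 1) := by
    intro I hI hIk
    by_contra h
    have h' : I (k + 1) = 0 := by omega
    apply h0
    have : I = 0 := by
      funext j
      rcases fin2_cases j k with rfl | rfl
      · exact hIk
      · exact h'
    rwa [← this]
  have hsingle_k : (Pi.single k 1 : Fin 2 → ℕ) k = 1 := by simp
  have hsingle_k1 : (Pi.single k 1 : Fin 2 → ℕ) (k + 1) = 0 :=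
    Pi.single_eq_of_ne (fin2_succ_ne k) 1
  set P := Δ.filter (fun I => I k = 0) with hP
  by_cases hPne : P.Nonempty
  · -- there is a pure monomial in the other variable
    set p' := P.inf' hPne (fun I => I (k + 1)) with hp'
    obtain ⟨Ip, hIpP, hIp⟩ := Finset.exists_mem_eq_inf' hPne (fun I => I (k + 1))
    have hIpΔ : Ip ∈ Δ := (Finset.mem_filter.1 hIpP).1
    have hIpk : Ip k = 0 := (Finset.mem_filter.1 hIpP).2
    set Q := P.filter (fun I => I (k + 1) = p') with hQ
    have hQne : Q.Nonempty := ⟨Ip, Finset.mem_filter.2 ⟨hIpP, hIp.symm⟩⟩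
    set b := Q.inf' hQne c with hb
    obtain ⟨Ib, hIbQ, hIb⟩ := Finset.exists_mem_eq_inf' hQne c
    have hIbP : Ib ∈ P := (Finset.mem_filter.1 hIbQ).1
    have hIbΔ : Ib ∈ Δ := (Finset.mem_filter.1 hIbP).1
    have hIbk : Ib k = 0 := (Finset.mem_filter.1 hIbP).2
    have hIbk1 : Ib (k + 1) = p' := (Finset.mem_filter.1 hIbQ).2
    have hp'1 : 1 ≤ p' := by rw [← hIbk1]; exact hIk1 Ib hIbΔ hIbk
    set M := 0 ⊔ Δ.sup' hne (fun I => (a - c I) ⊔ (b - c I)) with hM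
    have hM0 : (0 : ℝ) ≤ M := le_sup_left
    have hMa : ∀ I ∈ Δ, a - c I ≤ M := by
      intro I hI
      exact le_trans (le_trans le_sup_left
        (Finset.le_sup' (fun I => (a - c I) ⊔ (b - c I)) hI)) le_sup_right
    have hMb : ∀ I ∈ Δ, b - c I ≤ M := by
      intro I hI
      exact le_trans (le_trans le_sup_right
        (Finset.le_sup' (fun I => (a - c I) ⊔ (b - c I)) hI)) le_sup_right
    refine ⟨M, a, b, (p' : WithTop ℕ), by exact_mod_cast hp'1, ?_⟩
    intro y x hy hxk hxk1
    rw [reduce y x hy, tropMonomial_one, tropMonomial_coe, ← WithTop.coe_inf,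
      WithTop.coe_eq_coe]
    apply le_antisymm
    · apply le_inf
      · calc Δ.inf' hne _ ≤ c (Pi.single k 1) + ((Pi.single k 1 : Fin 2 → ℕ) k) * x k
              + ((Pi.single k 1 : Fin 2 → ℕ) (k + 1)) * x (k + 1) := Finset.inf'_le _ hk
          _ = a + x k := by rw [hsingle_k, hsingle_k1]; push_cast; ring
      · calc Δ.inf' hne _ ≤ c Ib + (Ib k) * x k + (Ib (k + 1)) * x (k + 1) :=
              Finset.inf'_le _ hIbΔ
          _ = b + p' * x (k + 1) := by rw [hIbk, hIbk1, ← hIb, ← hb]; push_cast; ring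
    · apply Finset.le_inf'
      intro I hI
      rcases Nat.eq_zero_or_pos (I k) with hIk | hIk
      · -- pure monomial: dominated by b + p' * x'
        have hIP : I ∈ P := Finset.mem_filter.2 ⟨hI, hIk⟩
        have hIp' : p' ≤ I (k + 1) := Finset.inf'_le _ hIP
        have hMbI : b - c I ≤ M := hMb I hI
        refine le_trans inf_le_right ?_
        rcases eq_or_lt_of_le hIp' with heq | hlt
        · have hbc : b ≤ c I := by
            rw [hb]; exact Finset.inf'_le _ (Finset.mem_filter.2 ⟨hIP, heq.symm⟩)
          rw [hIk, ← heq]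
          push_cast
          nlinarith
        · have : (p' : ℝ) + 1 ≤ (I (k + 1) : ℝ) := by exact_mod_cast hlt
          rw [hIk]
          push_cast
          nlinarith
      · -- monomial with positive k-exponent: dominated by a + x k
        refine le_trans inf_le_left ?_
        have hMaI : a - c I ≤ M := hMa I hI
        have h1 : (1 : ℝ) ≤ (I k : ℝ) := by exact_mod_cast hIk
        by_cases hee : I k = 1 ∧ I (k + 1) = 0
        · have : I = Pi.single k 1 := by
            funext j
            rcases fin2_cases j k with rfl | rfl
            · rw [hee.1, hsingle_k]
            · rw [hee.2, hsingle_k1]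
          rw [this, hsingle_k, hsingle_k1, ← ha]; push_cast; linarith
        · have h2 : 2 ≤ I k ∨ 1 ≤ I (k + 1) := by
            rcases Nat.lt_or_ge (I k) 2 with h | h
            · right
              rcases Nat.eq_zero_or_pos (I (k + 1)) with h' | h'
              · exfalso
                apply hee
                exact ⟨Nat.le_antisymm (Nat.lt_succ_iff.mp h) hIk, h'⟩
              · exact h'
            · left; exact h
          rcases h2 with h2 | h2
          · have h2' : (2 : ℝ) ≤ (I k : ℝ) := by exact_mod_cast h2
            have h3 : (0 : ℝ) ≤ (I (k + 1) : ℝ) := by positivity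
            nlinarith
          · have h2' : (1 : ℝ) ≤ (I (k + 1) : ℝ) := by exact_mod_cast h2
            nlinarith
  · -- no pure monomial: pure `a + x k`
    have hIkpos : ∀ I ∈ Δ, 1 ≤ I k := by
      intro I hI
      rcases Nat.eq_zero_or_pos (I k) with h | h
      · exact absurd ⟨I, Finset.mem_filter.2 ⟨hI, h⟩⟩ hPne
      · exact h
    set M := 0 ⊔ Δ.sup' hne (fun I => a - c I) with hM
    have hM0 : (0 : ℝ) ≤ M := le_sup_left
    have hMa : ∀ I ∈ Δ, a - c I ≤ M := by
      intro I hI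
      exact le_trans (Finset.le_sup' (fun I => a - c I) hI) le_sup_right
    refine ⟨M, a, 0, ⊤, le_top, ?_⟩
    intro y x hy hxk hxk1
    rw [reduce y x hy, tropMonomial_one, tropMonomial_top, inf_top_eq]
    rw [WithTop.coe_eq_coe]
    apply le_antisymm
    · calc Δ.inf' hne _ ≤ c (Pi.single k 1) + ((Pi.single k 1 : Fin 2 → ℕ) k) * x k
            + ((Pi.single k 1 : Fin 2 → ℕ) (k + 1)) * x (k + 1) := Finset.inf'_le _ hk
        _ = a + x k := by rw [hsingle_k, hsingle_k1]; push_cast; ring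
    · apply Finset.le_inf'
      intro I hI
      have hMaI : a - c I ≤ M := hMa I hI
      have h1 : (1 : ℝ) ≤ (I k : ℝ) := by exact_mod_cast hIkpos I hI
      by_cases hee : I k = 1 ∧ I (k + 1) = 0
      · have : I = Pi.single k 1 := by
          funext j
          rcases fin2_cases j k with rfl | rfl
          · rw [hee.1, hsingle_k]
          · rw [hee.2, hsingle_k1]
        rw [this, hsingle_k, hsingle_k1, ← ha]; push_cast; linarith
      · have hIk : 1 ≤ I k := hIkpos I hI
        have h2 : 2 ≤ I k ∨ 1 ≤ I (k + 1) := by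
          rcases Nat.lt_or_ge (I k) 2 with h | h
          · right
            rcases Nat.eq_zero_or_pos (I (k + 1)) with h' | h'
            · exfalso
              apply hee
              exact ⟨Nat.le_antisymm (Nat.lt_succ_iff.mp h) hIk, h'⟩
            · exact h'
          · left; exact h
        rcases h2 with h2 | h2
        · have h2' : (2 : ℝ) ≤ (I k : ℝ) := by exact_mod_cast h2
          have h3 : (0 : ℝ) ≤ (I (k + 1) : ℝ) := by positivity
          nlinarith
        · have h2' : (1 : ℝ) ≤ (I (k + 1) : ℝ) := by exact_mod_cast h2
          nlinarith

/-- (Normal form of weakly non-degenerate germs of `𝕋²`.)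
Let `f = (f₁,f₂)` be a tropical polynomial germ of `𝕋²` without constant terms,
`f_i(x) = min_{I∈Δ_i}(c_{i,I} + ⟨I,x⟩)`, whose linear-part matrix `A` over `𝕋` has tropical
determinant `(A₁₁+A₂₂) ⊓ (A₁₂+A₂₁) ≠ ∞` (weak non-degeneracy). Then there are `M ∈ ℝ`,
coefficients `a₁,a₂,b₁,b₂ ∈ ℝ` and exponents `p₁,p₂,q₁,q₂ ∈ ℕ* ∪ {∞}` with
`min(p₁,p₂) = min(q₁,q₂) = min(p₁,q₁) = min(p₂,q₂) = 1`, such that for all real `x₁,x₂ ≥ M`,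
`f(x₁,x₂) = ((a₁+p₁x₁) ⊓ (a₂+p₂x₂), (b₁+q₁x₁) ⊓ (b₂+q₂x₂))`, where `a + ∞·x ≡ ∞`. -/
theorem normal_form_dim2
    (Δ : Fin 2 → Finset (Fin 2 → ℕ))
    (hΔne : ∀ i, (Δ i).Nonempty) (hΔ0 : ∀ i, (0 : Fin 2 → ℕ) ∉ Δ i)
    (c : Fin 2 → (Fin 2 → ℕ) → ℝ)
    (f : (Fin 2 → WithTop ℝ) → (Fin 2 → WithTop ℝ))
    (hf : ∀ x i, f x i =
      (Δ i).inf' (hΔne i) fun I => ((c i I : ℝ) : WithTop ℝ) + ∑ j, (I j) • x j)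
    (A : Fin 2 → Fin 2 → WithTop ℝ)
    (hA : ∀ i j, A i j =
      if Pi.single j 1 ∈ Δ i then ((c i (Pi.single j 1) : ℝ) : WithTop ℝ) else ⊤)
    (hnd : (A 0 0 + A 1 1) ⊓ (A 0 1 + A 1 0) ≠ ⊤) :
    ∃ (M a₁ a₂ b₁ b₂ : ℝ) (p₁ p₂ q₁ q₂ : WithTop ℕ),
      p₁ ⊓ p₂ = 1 ∧ q₁ ⊓ q₂ = 1 ∧ p₁ ⊓ q₁ = 1 ∧ p₂ ⊓ q₂ = 1 ∧
      ∀ x₁ x₂ : ℝ, M ≤ x₁ → M ≤ x₂ →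
        f ![(x₁ : WithTop ℝ), (x₂ : WithTop ℝ)] 0
            = tropMonomial a₁ p₁ x₁ ⊓ tropMonomial a₂ p₂ x₂ ∧
        f ![(x₁ : WithTop ℝ), (x₂ : WithTop ℝ)] 1
            = tropMonomial b₁ q₁ x₁ ⊓ tropMonomial b₂ q₂ x₂ := by
  classical
  -- extract membership of basis vectors from nondegeneracy
  have hcases : (Pi.single 0 1 ∈ Δ 0 ∧ Pi.single 1 1 ∈ Δ 1)
      ∨ (Pi.single 1 1 ∈ Δ 0 ∧ Pi.single 0 1 ∈ Δ 1) := by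
    by_contra h
    push_neg at h
    apply hnd
    rw [inf_eq_top_iff]
    constructor
    · by_cases h00 : Pi.single 0 1 ∈ Δ 0
      · have h11 : Pi.single 1 1 ∉ Δ 1 := h.1 h00
        rw [hA 1 1, if_neg h11, add_top]
      · rw [hA 0 0, if_neg h00, top_add]
    · by_cases h01 : Pi.single 1 1 ∈ Δ 0
      · have h10 : Pi.single 0 1 ∉ Δ 1 := h.2 h01
        rw [hA 1 0, if_neg h10, add_top]
      · rw [hA 0 1, if_neg h01, top_add]
  have hy : ∀ x₁ x₂ : ℝ, ∀ j : Fin 2,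
      (![(x₁ : WithTop ℝ), (x₂ : WithTop ℝ)]) j = ((![x₁, x₂] j : ℝ) : WithTop ℝ) := by
    intro x₁ x₂ j
    fin_cases j <;> rfl
  rcases hcases with ⟨h0, h1⟩ | ⟨h0, h1⟩
  · obtain ⟨M₀, a₁, a₂, p₂, hp₂, hkey₀⟩ := key (Δ 0) (hΔne 0) (hΔ0 0) (c 0) 0 h0
    obtain ⟨M₁, b₂, b₁, q₁, hq₁, hkey₁⟩ := key (Δ 1) (hΔne 1) (hΔ0 1) (c 1) 1 h1
    refine ⟨M₀ ⊔ M₁, a₁, a₂, b₁, b₂, 1, p₂, q₁, 1,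
      inf_eq_left.2 hp₂, inf_eq_right.2 hq₁, inf_eq_left.2 hq₁, inf_eq_right.2 hp₂, ?_⟩
    intro x₁ x₂ hx₁ hx₂
    have hx₁₀ : M₀ ≤ x₁ := le_trans le_sup_left hx₁
    have hx₂₀ : M₀ ≤ x₂ := le_trans le_sup_left hx₂
    have hx₁₁ : M₁ ≤ x₁ := le_trans le_sup_right hx₁
    have hx₂₁ : M₁ ≤ x₂ := le_trans le_sup_right hx₂
    constructor
    · rw [hf]
      have := hkey₀ ![(x₁ : WithTop ℝ), (x₂ : WithTop ℝ)] ![x₁, x₂] (hy x₁ x₂)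
        (by simpa using hx₁₀) (by simpa using hx₂₀)
      simpa using this
    · rw [hf]
      have := hkey₁ ![(x₁ : WithTop ℝ), (x₂ : WithTop ℝ)] ![x₁, x₂] (hy x₁ x₂)
        (by simpa using hx₂₁) (by simpa using hx₁₁)
      simp only [show (1 : Fin 2) + 1 = 0 by decide] at this
      rw [show (![x₁, x₂] : Fin 2 → ℝ) 1 = x₂ by rfl,
        show (![x₁, x₂] : Fin 2 → ℝ) 0 = x₁ by rfl] at this
      rw [this, inf_comm]
  · obtain ⟨M₀, a₂, a₁, p₁, hp₁, hkey₀⟩ := key (Δ 0) (hΔne 0) (hΔ0 0) (c 0) 1 h0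
    obtain ⟨M₁, b₁, b₂, q₂, hq₂, hkey₁⟩ := key (Δ 1) (hΔne 1) (hΔ0 1) (c 1) 0 h1
    refine ⟨M₀ ⊔ M₁, a₁, a₂, b₁, b₂, p₁, 1, 1, q₂,
      inf_eq_right.2 hp₁, inf_eq_left.2 hq₂, inf_eq_right.2 hp₁, inf_eq_left.2 hq₂, ?_⟩
    intro x₁ x₂ hx₁ hx₂
    have hx₁₀ : M₀ ≤ x₁ := le_trans le_sup_left hx₁
    have hx₂₀ : M₀ ≤ x₂ := le_trans le_sup_left hx₂
    have hx₁₁ : M₁ ≤ x₁ := le_trans le_sup_right hx₁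
    have hx₂₁ : M₁ ≤ x₂ := le_trans le_sup_right hx₂
    constructor
    · rw [hf]
      have := hkey₀ ![(x₁ : WithTop ℝ), (x₂ : WithTop ℝ)] ![x₁, x₂] (hy x₁ x₂)
        (by simpa using hx₂₀) (by simpa using hx₁₀)
      simp only [show (1 : Fin 2) + 1 = 0 by decide] at this
      rw [show (![x₁, x₂] : Fin 2 → ℝ) 1 = x₂ by rfl,
        show (![x₁, x₂] : Fin 2 → ℝ) 0 = x₁ by rfl] at this
      rw [this, inf_comm]
    · rw [hf]
      have := hkey₁ ![(x₁ : WithTop ℝ), (x₂ : WithTop ℝ)] ![x₁, x₂] (hy x₁ x₂)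
        (by simpa using hx₁₁) (by simpa using hx₂₁)
      simpa using this
end

section
/- Let σ be a permutation of {1,…,d} of order s and a ∈ ℝ^d, let F : ℝ^d → ℝ^d be F(x)_k = x_{σ(k)} + a_{σ(k)}, and set w_k = Σ_{h=1}^{s} a_{σ^h(k)}; assume w_k > 0 for all k (F is contracting). Then there exists β ∈ ℝ^d such that the affine line L = { t·w − β : t ∈ ℝ } ⊆ ℝ^d is invariant under F; more precisely F(t·w − β) = (t + 1/s)·w − β for all t ∈ ℝ, so F maps L bijectively onto itself. (This is the key construction of the F-invariant line used to build the fundamental domain of a tropical monomial Hopf manifold in the paper.) -/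
/-- Let `σ` be a permutation of `{1,…,d}` of order `s`, `a ∈ ℝ^d`, and
`F(x)_k = x_{σ(k)} + a_{σ(k)}` on `ℝ^d`; set `w_k = Σ_{h=1}^s a_{σ^h(k)}` and assume `w_k > 0`
for all `k`. Then there is `β ∈ ℝ^d` such that the affine line `L = {t·w − β : t ∈ ℝ}` is
`F`-invariant: `F(t·w − β) = (t + 1/s)·w − β` for all `t ∈ ℝ`, so `F` maps `L` bijectively
onto itself. -/
theorem invariant_line_for_monomial_map {d : ℕ}
    (σ : Equiv.Perm (Fin d)) (s : ℕ) (hs : orderOf σ = s)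
    (a : Fin d → ℝ)
    (F : (Fin d → ℝ) → (Fin d → ℝ))
    (hF : ∀ x k, F x k = x (σ k) + a (σ k))
    (w : Fin d → ℝ)
    (hw : ∀ k, w k = ∑ h ∈ Finset.Icc 1 s, a ((σ ^ h) k))
    (hpos : ∀ k, 0 < w k) :
    ∃ β : Fin d → ℝ, ∀ t : ℝ, F (t • w - β) = (t + 1 / (s : ℝ)) • w - β := by
  rcases Nat.eq_zero_or_pos d with hd | hd
  · subst hd; exact ⟨0, fun t => funext fun k => k.elim0⟩
  have hs0 : 0 < s := hs ▸ orderOf_pos σ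
  have hss : (s : ℝ) ≠ 0 := Nat.cast_ne_zero.mpr hs0.ne'
  have hσs : σ ^ s = 1 := hs ▸ pow_orderOf_eq_one σ
  refine ⟨fun k => ∑ h ∈ Finset.Icc 1 s, ((h : ℝ) / s) * a ((σ ^ h) k),
    fun t => funext fun k => ?_⟩
  simp only [hF, Pi.sub_apply, Pi.smul_apply, smul_eq_mul]
  have key : ∀ (f : ℕ → ℝ), ∑ h ∈ Finset.Icc 1 s, f h = ∑ i ∈ Finset.range s, f (i+1) := by
    intro f
    rw [← Finset.Ico_add_one_right_eq_Icc, Finset.sum_Ico_eq_sum_range]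
    simp [add_comm]
  set g : ℕ → ℝ := fun i => a ((σ ^ (i+1)) k) with hgdef
  have hpow : ∀ i : ℕ, (σ ^ (i+1)) k = (σ ^ i) (σ k) := by
    intro i; rw [pow_succ]; rfl
  have hgs : g s = g 0 := by
    simp only [hgdef]
    congr 1
    rw [pow_succ, hσs, one_mul, pow_succ, pow_zero, one_mul]
  have hwk : w k = ∑ i ∈ Finset.range s, g i := by
    rw [hw, key]
  have hwσ : w (σ k) = w k := by
    rw [hw, key, hwk]
    have hco : ∀ i, a ((σ ^ (i+1)) (σ k)) = g (i+1) := by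
      intro i; simp only [hgdef]; rw [hpow (i+1)]
    rw [Finset.sum_congr rfl fun i _ => hco i]
    have h1 : ∑ i ∈ Finset.range (s+1), g i = ∑ i ∈ Finset.range s, g (i+1) + g 0 :=
      Finset.sum_range_succ' g s
    have h2 : ∑ i ∈ Finset.range (s+1), g i = ∑ i ∈ Finset.range s, g i + g s :=
      Finset.sum_range_succ g s
    rw [hgs] at h2
    linarith [h1, h2]
  have hβk : (∑ h ∈ Finset.Icc 1 s, ((h : ℝ)/s) * a ((σ ^ h) k))
      = ∑ i ∈ Finset.range s, (((i : ℝ)+1)/s) * g i := by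
    rw [key]; push_cast; rfl
  have hβσ : (∑ h ∈ Finset.Icc 1 s, ((h : ℝ)/s) * a ((σ ^ h) (σ k)))
      = ∑ i ∈ Finset.range s, (((i : ℝ)+1)/s) * g (i+1) := by
    rw [key]
    refine Finset.sum_congr rfl fun i _ => ?_
    simp only [hgdef]
    rw [← hpow (i+1)]
    push_cast
    ring
  have htel : ∑ i ∈ Finset.range s, (((i : ℝ)+1)/s) * g (i+1)
      = ∑ i ∈ Finset.range s, ((i : ℝ)/s) * g i + g 0 := by
    have h1 := Finset.sum_range_succ' (fun j => ((j : ℝ)/s) * g j) s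
    have h2 := Finset.sum_range_succ (fun j => ((j : ℝ)/s) * g j) s
    simp only [Nat.cast_zero, zero_div, zero_mul, add_zero] at h1
    rw [hgs, div_self hss, one_mul] at h2
    push_cast at h1 h2 ⊢
    linarith [h1, h2]
  have hdiff : (∑ h ∈ Finset.Icc 1 s, ((h : ℝ)/s) * a ((σ ^ h) (σ k)))
      - (∑ h ∈ Finset.Icc 1 s, ((h : ℝ)/s) * a ((σ ^ h) k))
      = a (σ k) - w k / s := by
    rw [hβσ, hβk, htel, hwk]
    have hsplit : ∑ i ∈ Finset.range s, (((i : ℝ)+1)/s) * g i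
        = ∑ i ∈ Finset.range s, (((i : ℝ)/s) * g i + (1/s) * g i) := by
      refine Finset.sum_congr rfl fun i _ => ?_
      ring
    rw [hsplit, Finset.sum_add_distrib, ← Finset.mul_sum]
    have hg0 : g 0 = a (σ k) := by simp [hgdef, pow_one]
    rw [hg0]; ring
  rw [hwσ]
  linear_combination -hdiff
end

section
/- Let d ≥ 1 and let a ∈ ℝ^d have all coordinates strictly positive. Then the diagonal tropical Hopf manifold S = (𝕋^d ∖ {∞})/ℤ, the quotient by the ℤ-action n·x = x + n·a, is homeomorphic to S¹ × D^{d−1}, the product of the circle with the closed (d−1)-dimensional Euclidean ball. (This homeomorphism is asserted and used in the paper's computation of the (p,q)-homology of diagonal tropical Hopf manifolds.) -/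
/-!
In the coordinates `z_k = exp (-x_k / a_k)` the space `𝕋^d ∖ {∞}` becomes the punctured orthant
`[0, ∞)^d ∖ {0}`, and `n ∈ ℤ` acts by `z ↦ exp (-n) • z`. Log-polar coordinates for the sup norm,
`z ↦ (log ‖z‖ mod 1, z / ‖z‖)`, therefore induce a continuous bijection from the quotient onto
`S¹ × W`, where `W` is the nonnegative part of the unit sphere of `ℓ^∞`. The quotient is compact,
because every orbit meets the compact band `exp (-1) ≤ ‖z‖ ≤ 1`, so this bijection is a
homeomorphism. Finally, projecting along the diagonal maps `W` homeomorphically onto a compact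
convex body with nonempty interior in `ℝ^(d-1)`, and such a body is homeomorphic to a closed ball.
-/

/-- The tropical affine space `𝕋 = ℝ ∪ {∞}` is `WithTop ℝ`, with the order topology. -/
noncomputable instance : TopologicalSpace (WithTop ℝ) := Preorder.topology _
instance : OrderTopology (WithTop ℝ) := ⟨rfl⟩

open Set Filter Topology Metric

namespace TropicalHopf

noncomputable section

def expNegDiv (c : ℝ) : WithTop ℝ → ℝ
  | ⊤ => 0
  | (s : ℝ) => Real.exp (-s / c)

variable {c : ℝ}

@[simp] lemma expNegDiv_top (c : ℝ) : expNegDiv c ⊤ = 0 := rfl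

@[simp] lemma expNegDiv_coe (c s : ℝ) : expNegDiv c s = Real.exp (-s / c) := rfl

lemma expNegDiv_nonneg (c : ℝ) (t : WithTop ℝ) : 0 ≤ expNegDiv c t := by
  cases t <;> simp [Real.exp_nonneg]

lemma expNegDiv_eq_zero_iff {t : WithTop ℝ} : expNegDiv c t = 0 ↔ t = ⊤ := by
  cases t <;> simp [Real.exp_ne_zero]

lemma expNegDiv_add_coe_mul (hc : c ≠ 0) (t : WithTop ℝ) (n : ℝ) :
    expNegDiv c (t + ↑(n * c)) = Real.exp (-n) * expNegDiv c t := by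
  induction t using WithTop.recTopCoe with
  | top => simp
  | coe s =>
    rw [← WithTop.coe_add, expNegDiv_coe, expNegDiv_coe, ← Real.exp_add]
    congr 1
    field_simp
    ring

lemma expNegDiv_strictAnti (hc : 0 < c) : StrictAnti (expNegDiv c) := by
  intro s t hst
  lift s to ℝ using hst.ne_top
  induction t using WithTop.recTopCoe with
  | top => simpa using Real.exp_pos _
  | coe t =>
    have := WithTop.coe_lt_coe.1 hst
    simp only [expNegDiv_coe]
    gcongr

lemma expNegDiv_le_one_iff (hc : 0 < c) {t : WithTop ℝ} : expNegDiv c t ≤ 1 ↔ 0 ≤ t := by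
  have h0 : expNegDiv c 0 = 1 := by simpa using expNegDiv_coe c 0
  rw [← h0, (expNegDiv_strictAnti hc).le_iff_ge]

lemma exists_expNegDiv_eq (hc : c ≠ 0) {z : ℝ} (hz : 0 ≤ z) : ∃ t, expNegDiv c t = z := by
  rcases hz.eq_or_lt with rfl | hz
  · exact ⟨⊤, rfl⟩
  · refine ⟨↑(-c * Real.log z), ?_⟩
    rw [expNegDiv_coe, neg_mul, neg_neg, mul_div_cancel_left₀ _ hc, Real.exp_log hz]

lemma continuous_expNegDiv (hc : 0 < c) : Continuous (expNegDiv c) := by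
  -- An order isomorphism between order topologies is a homeomorphism.
  let e : WithTop ℝ ≃o (Ici (0 : ℝ))ᵒᵈ := StrictMono.orderIsoOfSurjective
    (fun t => OrderDual.toDual ⟨expNegDiv c t, expNegDiv_nonneg c t⟩)
    (fun _ _ hst => expNegDiv_strictAnti hc hst)
    (fun z => (exists_expNegDiv_eq hc.ne' z.2).imp fun _ ht => Subtype.ext ht)
  exact continuous_subtype_val.comp (continuous_ofDual.comp e.toHomeomorph.continuous)

variable {ι : Type*} {a : ι → ℝ}

def tropShift (a : ι → ℝ) (t : ℝ) (x : ι → WithTop ℝ) : ι → WithTop ℝ :=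
  fun k => x k + ↑(t * a k)

def expCoords (a : ι → ℝ) (x : ι → WithTop ℝ) : ι → ℝ :=
  fun k => expNegDiv (a k) (x k)

lemma expCoords_nonneg (a : ι → ℝ) (x : ι → WithTop ℝ) : 0 ≤ expCoords a x :=
  fun k => expNegDiv_nonneg (a k) (x k)

lemma expCoords_eq_zero_iff {x : ι → WithTop ℝ} : expCoords a x = 0 ↔ x = fun _ => ⊤ := by
  simp only [funext_iff, expCoords, Pi.zero_apply, expNegDiv_eq_zero_iff]

lemma expCoords_tropShift (ha : ∀ k, a k ≠ 0) (t : ℝ) (x : ι → WithTop ℝ) :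
    expCoords a (tropShift a t x) = Real.exp (-t) • expCoords a x :=
  funext fun k => expNegDiv_add_coe_mul (ha k) (x k) t

lemma expCoords_injective (ha : ∀ k, 0 < a k) : Function.Injective (expCoords a) :=
  fun _ _ h => funext fun k => (expNegDiv_strictAnti (ha k)).injective (congrFun h k)

lemma exists_expCoords_eq (ha : ∀ k, a k ≠ 0) {z : ι → ℝ} (hz : 0 ≤ z) :
    ∃ x, expCoords a x = z := by
  choose x hx using fun k => exists_expNegDiv_eq (ha k) (hz k)
  exact ⟨x, funext hx⟩

lemma continuous_expCoords (ha : ∀ k, 0 < a k) : Continuous (expCoords a) :=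
  continuous_pi fun k => (continuous_expNegDiv (ha k)).comp (continuous_apply k)

lemma isCompact_setOf_norm_expCoords_le_one [Fintype ι] (ha : ∀ k, 0 < a k) :
    IsCompact {x : ι → WithTop ℝ | ‖expCoords a x‖ ≤ 1} := by
  refine (isCompact_univ_pi fun _ => isCompact_Icc (a := 0) (b := ⊤)).of_isClosed_subset
    (isClosed_le (continuous_norm.comp (continuous_expCoords ha)) continuous_const) ?_
  intro x hx k _
  have hk : expCoords a x k ≤ 1 :=
    (Real.le_norm_self _).trans ((norm_le_pi_norm (expCoords a x) k).trans hx)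
  exact ⟨(expNegDiv_le_one_iff (ha k)).1 hk, le_top⟩

section LogPolar

variable {E : Type*} [NormedAddCommGroup E] [NormedSpace ℝ E]

def logPolar (z : E) : AddCircle (1 : ℝ) × E := (↑(Real.log ‖z‖), ‖z‖⁻¹ • z)

lemma addCircle_coe_eq_coe_iff {s t : ℝ} :
    (s : AddCircle (1 : ℝ)) = t ↔ ∃ n : ℤ, t = s + n := by
  rw [eq_comm, ← sub_eq_zero, ← AddCircle.coe_sub, AddCircle.coe_eq_zero_iff]
  simp only [zsmul_eq_mul, mul_one, eq_comm, sub_eq_iff_eq_add']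

lemma logPolar_exp_smul (t : ℝ) {w : E} (hw : ‖w‖ = 1) :
    logPolar (Real.exp t • w) = (↑t, w) := by
  have hnorm : ‖Real.exp t • w‖ = Real.exp t := by
    rw [norm_smul, hw, mul_one, Real.norm_of_nonneg (Real.exp_nonneg t)]
  rw [logPolar, hnorm, Real.log_exp, smul_smul, inv_mul_cancel₀ (Real.exp_ne_zero t), one_smul]

lemma logPolar_exp_intCast_smul (n : ℤ) {z : E} (hz : z ≠ 0) :
    logPolar (Real.exp n • z) = logPolar z := by
  have hz' : ‖z‖ ≠ 0 := norm_ne_zero_iff.2 hz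
  have hunit : ‖‖z‖⁻¹ • z‖ = 1 := by rw [norm_smul, norm_inv, norm_norm, inv_mul_cancel₀ hz']
  have h := logPolar_exp_smul (n + Real.log ‖z‖) hunit
  rw [Real.exp_add, Real.exp_log (norm_pos_iff.2 hz), mul_smul, smul_inv_smul₀ hz'] at h
  rw [h, logPolar, Prod.mk.injEq, addCircle_coe_eq_coe_iff]
  exact ⟨⟨-n, by push_cast; ring⟩, rfl⟩

lemma exists_eq_exp_intCast_smul_of_logPolar_eq {z z' : E} (hz : z ≠ 0) (hz' : z' ≠ 0)
    (h : logPolar z = logPolar z') : ∃ n : ℤ, z' = Real.exp n • z := by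
  obtain ⟨hlog, hdir⟩ := Prod.mk.inj h
  obtain ⟨n, hn⟩ := addCircle_coe_eq_coe_iff.1 hlog
  have hnorm : ‖z'‖ = Real.exp n * ‖z‖ := by
    rw [← Real.exp_log (norm_pos_iff.2 hz'), hn, Real.exp_add, Real.exp_log (norm_pos_iff.2 hz),
      mul_comm]
  refine ⟨n, ?_⟩
  calc z' = ‖z'‖ • ‖z'‖⁻¹ • z' := (smul_inv_smul₀ (norm_ne_zero_iff.2 hz') z').symm
    _ = Real.exp n • z := by
      rw [← hdir, hnorm, mul_smul, smul_inv_smul₀ (norm_ne_zero_iff.2 hz)]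

lemma continuousOn_logPolar : ContinuousOn (logPolar (E := E)) {0}ᶜ := by
  have hnorm : ∀ z ∈ ({0}ᶜ : Set E), ‖z‖ ≠ 0 := fun z hz => norm_ne_zero_iff.2 hz
  refine ContinuousOn.prodMk ?_ ?_
  · exact (AddCircle.continuous_mk' 1).comp_continuousOn
      (continuous_norm.continuousOn.log hnorm)
  · exact (continuous_norm.continuousOn.inv₀ hnorm).smul continuousOn_id

end LogPolar

section NonnegUnitSphere

variable (ι) [Fintype ι]

def nonnegUnitSphere : Set (ι → ℝ) := {w | 0 ≤ w ∧ ‖w‖ = 1}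

variable {ι}

lemma mem_nonnegUnitSphere_iff [Nonempty ι] {w : ι → ℝ} :
    w ∈ nonnegUnitSphere ι ↔ (∀ k, w k ∈ Icc 0 1) ∧ ∃ k, w k = 1 := by
  constructor
  · rintro ⟨h0, h1⟩
    obtain ⟨⟨k, hk⟩, -⟩ := IsGreatest.pi_norm w
    refine ⟨fun k => ⟨h0 k, ?_⟩, k, ?_⟩
    · simpa [Real.norm_of_nonneg (h0 k), h1] using norm_le_pi_norm w k
    · simpa [Real.norm_of_nonneg (h0 k), h1] using hk
  · rintro ⟨hw, k, hk⟩
    refine ⟨fun k => (hw k).1, le_antisymm ?_ ?_⟩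
    · exact (pi_norm_le_iff_of_nonneg zero_le_one).2 fun k => by
        simpa [abs_of_nonneg (hw k).1] using (hw k).2
    · simpa [hk] using norm_le_pi_norm w k

lemma isCompact_nonnegUnitSphere : IsCompact (nonnegUnitSphere ι) :=
  (isCompact_sphere 0 1).of_isClosed_subset
    ((isClosed_le continuous_const continuous_id).inter
      (isClosed_eq continuous_norm continuous_const))
    fun _ hw => mem_sphere_zero_iff_norm.2 hw.2

lemma inv_norm_smul_mem_nonnegUnitSphere {z : ι → ℝ} (hz : 0 ≤ z) (hz' : z ≠ 0) :
    ‖z‖⁻¹ • z ∈ nonnegUnitSphere ι :=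
  ⟨smul_nonneg (inv_nonneg.2 (norm_nonneg z)) hz,
    by rw [norm_smul, norm_inv, norm_norm, inv_mul_cancel₀ (norm_ne_zero_iff.2 hz')]⟩

end NonnegUnitSphere

section Projection

variable {e : ℕ}

def paddedCoord (e : ℕ) : Fin (e + 1) → StrongDual ℝ (EuclideanSpace ℝ (Fin e)) :=
  Fin.cons 0 EuclideanSpace.proj

def diagProj (w : Fin (e + 1) → ℝ) : EuclideanSpace ℝ (Fin e) :=
  WithLp.toLp 2 fun i => w i.succ - w 0

lemma paddedCoord_diagProj (w : Fin (e + 1) → ℝ) (k : Fin (e + 1)) :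
    paddedCoord e k (diagProj w) = w k - w 0 := by
  cases k using Fin.cases <;> simp [paddedCoord, diagProj]

lemma continuous_diagProj : Continuous (diagProj (e := e)) :=
  (PiLp.continuous_toLp 2 _).comp
    (continuous_pi fun i => (continuous_apply i.succ).sub (continuous_apply 0))

def unitOscillationSet (e : ℕ) : Set (EuclideanSpace ℝ (Fin e)) :=
  {v | ∀ i j, paddedCoord e i v - paddedCoord e j v ≤ 1}

lemma convex_unitOscillationSet : Convex ℝ (unitOscillationSet e) := by
  simp only [unitOscillationSet, ofPred_forall]
  exact convex_iInter fun i => convex_iInter fun j =>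
    (convex_Iic 1).linear_preimage (paddedCoord e i - paddedCoord e j).toLinearMap

lemma zero_mem_interior_unitOscillationSet : 0 ∈ interior (unitOscillationSet e) := by
  rw [mem_interior_iff_mem_nhds]
  have h : ∀ i j, ∀ᶠ v in 𝓝 0, (paddedCoord e i - paddedCoord e j) v < 1 := fun i j =>
    ((paddedCoord e i - paddedCoord e j).continuous.tendsto' 0 0 (map_zero _)).eventually_lt_const
      zero_lt_one
  filter_upwards [eventually_all.2 fun i => eventually_all.2 (h i)] with v hv i j
  exact (hv i j).le

lemma bijOn_diagProj :
    BijOn diagProj (nonnegUnitSphere (Fin (e + 1))) (unitOscillationSet e) := by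
  refine ⟨fun w hw i j => ?_, fun w hw w' hw' h => ?_, fun v hv => ?_⟩
  · obtain ⟨hw, -⟩ := mem_nonnegUnitSphere_iff.1 hw
    rw [paddedCoord_diagProj, paddedCoord_diagProj]
    linarith [(hw i).2, (hw j).1]
  · obtain ⟨hb, k, hk⟩ := mem_nonnegUnitSphere_iff.1 hw
    obtain ⟨hb', k', hk'⟩ := mem_nonnegUnitSphere_iff.1 hw'
    have hdiff : ∀ i, w i - w 0 = w' i - w' 0 := fun i => by
      rw [← paddedCoord_diagProj, ← paddedCoord_diagProj, h]
    funext i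
    linarith [hdiff i, hdiff k, hdiff k', (hb k').2, (hb' k).2]
  · set u : Fin (e + 1) → ℝ := fun k => paddedCoord e k v
    obtain ⟨k₀, -, hk₀⟩ := Finset.univ.exists_mem_eq_sup' Finset.univ_nonempty u
    have hle : ∀ k, u k ≤ u k₀ := fun k => hk₀ ▸ Finset.univ.le_sup' u (Finset.mem_univ k)
    have hge : ∀ k, u k₀ - u k ≤ 1 := fun k => hv k₀ k
    -- shift the padded coordinates so that their maximum becomes `1`
    refine ⟨fun k => u k + (1 - u k₀), mem_nonnegUnitSphere_iff.2
      ⟨fun k => ⟨by linarith [hge k], by linarith [hle k]⟩, k₀, by ring⟩, ?_⟩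
    ext i
    simp [diagProj, u, paddedCoord]

theorem nonempty_homeomorph_nonnegUnitSphere_closedBall (e : ℕ) :
    Nonempty (nonnegUnitSphere (Fin (e + 1)) ≃ₜ closedBall (0 : EuclideanSpace ℝ (Fin e)) 1) := by
  have hQ : IsCompact (unitOscillationSet e) :=
    bijOn_diagProj.image_eq ▸ isCompact_nonnegUnitSphere.image continuous_diagProj
  have := isCompact_iff_compactSpace.1 (isCompact_nonnegUnitSphere (ι := Fin (e + 1)))
  let f : nonnegUnitSphere (Fin (e + 1)) ≃ₜ unitOscillationSet e :=
    (continuous_diagProj.restrict bijOn_diagProj.mapsTo).homeoOfEquivCompactToT2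
      (f := bijOn_diagProj.equiv _)
  obtain ⟨h, -, hball, -⟩ := exists_homeomorph_image_interior_closure_frontier_eq_unitBall
    convex_unitOscillationSet ⟨0, zero_mem_interior_unitOscillationSet⟩ hQ.isBounded
  rw [hQ.isClosed.closure_eq] at hball
  exact ⟨f.trans ((h.image _).trans (.setCongr hball))⟩

end Projection

section Quotient

variable {X Y : Type*} [TopologicalSpace X] [TopologicalSpace Y]

lemma compactSpace_quotient_of_isCompact (r : Setoid X) {K : Set X} (hK : IsCompact K)
    (h : ∀ x, ∃ y ∈ K, r x y) : CompactSpace (Quotient r) := by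
  refine ⟨?_⟩
  convert hK.image continuous_quotient_mk'
  refine (eq_univ_of_forall fun q => ?_).symm
  induction q using Quotient.ind with
  | _ x =>
    obtain ⟨y, hyK, hxy⟩ := h x
    exact ⟨y, hyK, Quotient.sound (r.symm hxy)⟩

def quotientHomeomorphOfFibers [T2Space Y] (r : Setoid X) [CompactSpace (Quotient r)] {f : X → Y}
    (hf : Continuous f) (hsurj : Function.Surjective f) (hfr : ∀ x y, f x = f y ↔ r x y) :
    Quotient r ≃ₜ Y :=
  have hbij : Function.Bijective (Quotient.lift f fun x y => (hfr x y).2) :=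
    ⟨fun p q => Quotient.inductionOn₂ p q fun x y h => Quotient.sound ((hfr x y).1 h),
      fun y => (hsurj y).elim fun x hx => ⟨Quotient.mk r x, hx⟩⟩
  (hf.quotient_lift _).homeoOfEquivCompactToT2 (f := .ofBijective _ hbij)

end Quotient

section HopfMap

abbrev puncturedTropicalSpace (ι : Type*) : Set (ι → WithTop ℝ) := {x | x ≠ fun _ => ⊤}

lemma mem_puncturedTropicalSpace_iff (a : ι → ℝ) {x : ι → WithTop ℝ} :
    x ∈ puncturedTropicalSpace ι ↔ expCoords a x ≠ 0 :=
  expCoords_eq_zero_iff.not.symm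

lemma expCoords_ne_zero (x : puncturedTropicalSpace ι) : expCoords a x ≠ 0 :=
  (mem_puncturedTropicalSpace_iff a).1 x.2

lemma tropShift_mem_puncturedTropicalSpace (ha : ∀ k, a k ≠ 0) (t : ℝ)
    (x : puncturedTropicalSpace ι) : tropShift a t x ∈ puncturedTropicalSpace ι := by
  rw [mem_puncturedTropicalSpace_iff a, expCoords_tropShift ha]
  exact smul_ne_zero (Real.exp_ne_zero _) (expCoords_ne_zero x)

variable [Fintype ι]

def hopfMap (a : ι → ℝ) (x : puncturedTropicalSpace ι) :
    AddCircle (1 : ℝ) × nonnegUnitSphere ι :=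
  ((logPolar (expCoords a x)).1,
    ⟨(logPolar (expCoords a x)).2,
      inv_norm_smul_mem_nonnegUnitSphere (expCoords_nonneg a x) (expCoords_ne_zero x)⟩)

lemma hopfMap_eq_hopfMap_iff {x y : puncturedTropicalSpace ι} :
    hopfMap a x = hopfMap a y ↔ logPolar (expCoords a x) = logPolar (expCoords a y) := by
  simp only [hopfMap, Prod.ext_iff, Subtype.ext_iff]

lemma continuous_hopfMap (ha : ∀ k, 0 < a k) : Continuous (hopfMap a) := by
  have h : Continuous fun x : puncturedTropicalSpace ι => logPolar (expCoords a x) :=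
    continuousOn_logPolar.comp_continuous ((continuous_expCoords ha).comp continuous_subtype_val)
      expCoords_ne_zero
  exact (continuous_fst.comp h).prodMk
    ((continuous_snd.comp h).subtype_mk fun x => (hopfMap a x).2.2)

lemma hopfMap_eq_hopfMap_iff_exists_int (ha : ∀ k, 0 < a k) {x y : puncturedTropicalSpace ι} :
    hopfMap a x = hopfMap a y ↔ ∃ n : ℤ, (y : ι → WithTop ℝ) = tropShift a n x := by
  have ha' : ∀ k, a k ≠ 0 := fun k => (ha k).ne'
  rw [hopfMap_eq_hopfMap_iff]
  constructor
  · intro h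
    obtain ⟨n, hn⟩ := exists_eq_exp_intCast_smul_of_logPolar_eq (expCoords_ne_zero x)
      (expCoords_ne_zero y) h
    refine ⟨-n, expCoords_injective ha ?_⟩
    rw [hn, expCoords_tropShift ha', Int.cast_neg, neg_neg]
  · rintro ⟨n, hn⟩
    rw [hn, expCoords_tropShift ha', ← Int.cast_neg]
    exact (logPolar_exp_intCast_smul _ (expCoords_ne_zero x)).symm

lemma hopfMap_surjective (ha : ∀ k, 0 < a k) : Function.Surjective (hopfMap a) := by
  rintro ⟨θ, w, hw⟩
  obtain ⟨t, rfl⟩ := QuotientAddGroup.mk_surjective θ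
  have hz : 0 ≤ Real.exp t • w := smul_nonneg (Real.exp_nonneg t) hw.1
  obtain ⟨x, hx⟩ := exists_expCoords_eq (fun k => (ha k).ne') hz
  have hxX : x ∈ puncturedTropicalSpace ι := by
    rw [mem_puncturedTropicalSpace_iff a, hx]
    exact smul_ne_zero (Real.exp_ne_zero t) (norm_ne_zero_iff.1 (hw.2.trans_ne one_ne_zero))
  refine ⟨⟨x, hxX⟩, ?_⟩
  simp only [hopfMap, hx, logPolar_exp_smul t hw.2]

lemma isCompact_setOf_norm_expCoords_mem_Icc (ha : ∀ k, 0 < a k) :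
    IsCompact {x : puncturedTropicalSpace ι | ‖expCoords a x‖ ∈ Icc (Real.exp (-1)) 1} := by
  have hsub : {x | ‖expCoords a x‖ ∈ Icc (Real.exp (-1)) 1} ⊆ puncturedTropicalSpace ι :=
    fun x hx => (mem_puncturedTropicalSpace_iff a).2
      (norm_pos_iff.1 ((Real.exp_pos _).trans_le hx.1))
  rw [Subtype.isCompact_iff]
  change IsCompact (Subtype.val '' (Subtype.val ⁻¹' {x | ‖expCoords a x‖ ∈ Icc (Real.exp (-1)) 1}))
  rw [Subtype.image_preimage_coe, inter_eq_right.2 hsub]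
  exact (isCompact_setOf_norm_expCoords_le_one ha).of_isClosed_subset
    (isClosed_Icc.preimage (continuous_norm.comp (continuous_expCoords ha))) fun x hx => hx.2

lemma exists_norm_expCoords_tropShift_mem_Icc (ha : ∀ k, 0 < a k)
    (x : puncturedTropicalSpace ι) :
    ∃ n : ℤ, ‖expCoords a (tropShift a n x)‖ ∈ Icc (Real.exp (-1)) 1 := by
  have hpos : 0 < ‖expCoords a x‖ := norm_pos_iff.2 (expCoords_ne_zero x)
  set s := Real.log ‖expCoords a x‖
  refine ⟨⌈s⌉, ?_⟩
  have hnorm : ‖expCoords a (tropShift a ⌈s⌉ x)‖ = Real.exp (-⌈s⌉ + s) := by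
    rw [expCoords_tropShift (fun k => (ha k).ne'), norm_smul,
      Real.norm_of_nonneg (Real.exp_nonneg _), Real.exp_add, Real.exp_log hpos]
  rw [hnorm]
  exact ⟨Real.exp_le_exp.2 (by linarith [Int.ceil_lt_add_one s]),
    Real.exp_le_one_iff.2 (by linarith [Int.le_ceil s])⟩

theorem nonempty_homeomorph_quotient_addCircle_prod (ha : ∀ k, 0 < a k)
    (r : Setoid (puncturedTropicalSpace ι))
    (hr : ∀ x y : puncturedTropicalSpace ι, r.r x y ↔ ∃ n : ℤ, ∀ k,
      (y : ι → WithTop ℝ) k = (x : ι → WithTop ℝ) k + (((n : ℝ) * a k : ℝ) : WithTop ℝ)) :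
    Nonempty (Quotient r ≃ₜ AddCircle (1 : ℝ) × nonnegUnitSphere ι) := by
  have hr' : ∀ x y, hopfMap a x = hopfMap a y ↔ r x y := fun x y => by
    simp only [hopfMap_eq_hopfMap_iff_exists_int ha, funext_iff]
    exact (hr x y).symm
  have : CompactSpace (Quotient r) := compactSpace_quotient_of_isCompact r
    (isCompact_setOf_norm_expCoords_mem_Icc ha) fun x => by
      obtain ⟨n, hn⟩ := exists_norm_expCoords_tropShift_mem_Icc ha x
      exact ⟨⟨_, tropShift_mem_puncturedTropicalSpace (fun k => (ha k).ne') n x⟩, hn,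
        (hr _ _).2 ⟨n, fun _ => rfl⟩⟩
  exact ⟨quotientHomeomorphOfFibers r (continuous_hopfMap ha) (hopfMap_surjective ha) hr'⟩

end HopfMap

end
end TropicalHopf

/-- For `d ≥ 1` and a vector `a ∈ ℝ^d` with strictly positive coordinates,
the diagonal tropical Hopf manifold `S = (𝕋^d ∖ {∞})/ℤ`, the quotient of `X = 𝕋^d ∖ {∞}` by
the ℤ-action `n·x = x + n·a`, is homeomorphic to `S¹ × D^{d−1}`, the product of the circle
with the closed `(d−1)`-dimensional Euclidean ball. -/
theorem diagonal_hopf_homeo_circle_ball {d : ℕ} (hd : 1 ≤ d)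
    (a : Fin d → ℝ) (ha : ∀ k, 0 < a k)
    (X : Set (Fin d → WithTop ℝ)) (hX : X = {x | x ≠ fun _ => ⊤})
    (r : Setoid X)
    (hr : ∀ x y : X, r.r x y ↔ ∃ n : ℤ, ∀ k,
      (y : Fin d → WithTop ℝ) k = (x : Fin d → WithTop ℝ) k + (((n : ℝ) * a k : ℝ) : WithTop ℝ)) :
    Nonempty (Quotient r ≃ₜ
      Circle × (Metric.closedBall (0 : EuclideanSpace ℝ (Fin (d - 1))) 1)) := by
  obtain ⟨e, rfl⟩ : ∃ e, d = e + 1 := ⟨d - 1, by omega⟩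
  subst hX
  obtain ⟨f⟩ := TropicalHopf.nonempty_homeomorph_quotient_addCircle_prod ha r hr
  obtain ⟨g⟩ := TropicalHopf.nonempty_homeomorph_nonnegUnitSphere_closedBall e
  exact ⟨f.trans ((AddCircle.homeomorphCircle one_ne_zero).prodCongr g)⟩
end

section
/- Let d ≥ 2 and let a ∈ ℝ^d have all coordinates strictly positive. Let B = { x ∈ 𝕋^d : x ≠ ∞ and x_i = ∞ for at least one i } be the boundary of 𝕋^d ∖ {∞}; B is invariant under translation by a. Then the quotient B/ℤ (by the action n·x = x + n·a), which is the boundary ∂S of the diagonal tropical Hopf manifold S = (𝕋^d ∖ {∞})/ℤ, is homeomorphic to S¹ × S^{d−2}, the product of the circle with the (d−2)-dimensional sphere. (This claim is used in the paper's computation of H_{d,q} of diagonal tropical Hopf manifolds.) -/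
open Real Set Topology Function

theorem Quotient.nonempty_homeomorph_of_isCompact_image_eq_univ {X Y : Type*}
    [TopologicalSpace X] [TopologicalSpace Y] [T2Space Y] (r : Setoid X) {f : X → Y}
    (hf : Continuous f) (hfr : ∀ x y, f x = f y ↔ r x y) {K : Set X} (hK : IsCompact K)
    (hKf : f '' K = univ) : Nonempty (Quotient r ≃ₜ Y) := by
  let F : Quotient r → Y := Quotient.lift f fun x y h => (hfr x y).2 h
  have hF : Bijective F := by
    refine ⟨fun p q => Quotient.inductionOn₂ p q fun x y h => Quotient.sound ((hfr x y).1 h), ?_⟩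
    intro y
    obtain ⟨x, -, rfl⟩ := hKf.symm ▸ mem_univ y
    exact ⟨Quotient.mk r x, rfl⟩
  have : CompactSpace (Quotient r) := by
    refine ⟨?_⟩
    have : Quotient.mk r '' K = univ := by
      refine eq_univ_of_forall fun q => Quotient.inductionOn q fun x => ?_
      obtain ⟨y, hyK, hy⟩ := hKf.symm ▸ mem_univ (f x)
      exact ⟨y, hyK, Quotient.sound ((hfr y x).1 hy)⟩
    exact this ▸ hK.image continuous_quotient_mk'
  exact ⟨Continuous.homeoOfEquivCompactToT2 (f := Equiv.ofBijective F hF) (hf.quotient_lift _)⟩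

noncomputable def tropExp (c : ℝ) (x : WithTop ℝ) : ℝ :=
  WithTop.recTopCoe 0 (fun t => exp (-(c * t))) x

@[simp] lemma tropExp_top (c : ℝ) : tropExp c ⊤ = 0 := rfl
@[simp] lemma tropExp_coe (c t : ℝ) : tropExp c t = exp (-(c * t)) := rfl

lemma tropExp_nonneg (c : ℝ) (x : WithTop ℝ) : 0 ≤ tropExp c x := by
  cases x <;> simp [exp_nonneg]

@[simp] lemma tropExp_eq_zero_iff {c : ℝ} {x : WithTop ℝ} : tropExp c x = 0 ↔ x = ⊤ := by
  cases x <;> simp [exp_ne_zero]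

lemma tropExp_add_coe (c : ℝ) (x : WithTop ℝ) (s : ℝ) :
    tropExp c (x + s) = exp (-(c * s)) * tropExp c x := by
  cases x with
  | top => simp
  | coe t => rw [← WithTop.coe_add, tropExp_coe, tropExp_coe, ← exp_add]; ring_nf

lemma tropExp_strictAnti {c : ℝ} (hc : 0 < c) : StrictAnti (tropExp c) := by
  intro x y hxy
  lift x to ℝ using hxy.ne_top
  cases y with
  | top => simpa using exp_pos _
  | coe t => simpa [hc] using WithTop.coe_lt_coe.1 hxy

lemma exists_tropExp_eq {c : ℝ} (hc : c ≠ 0) {y : ℝ} (hy : 0 ≤ y) : ∃ x, tropExp c x = y := by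
  rcases hy.eq_or_lt with rfl | hy
  · exact ⟨⊤, rfl⟩
  · exact ⟨(-log y / c : ℝ), by simp [mul_div_cancel₀ _ hc, exp_log hy]⟩

lemma isClosedEmbedding_tropExp {c : ℝ} (hc : 0 < c) : IsClosedEmbedding (tropExp c) := by
  let e : WithTop ℝ ≃o Iic (0 : ℝ) :=
    StrictMono.orderIsoOfSurjective (fun x => ⟨-tropExp c x, by simp [tropExp_nonneg]⟩)
      (fun x y h => neg_lt_neg (tropExp_strictAnti hc h)) fun ⟨y, hy⟩ => by
        obtain ⟨x, hx⟩ := exists_tropExp_eq hc.ne' (neg_nonneg.2 hy)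
        exact ⟨x, Subtype.ext (by simp [hx])⟩
  have : tropExp c = Neg.neg ∘ Subtype.val ∘ e := funext fun x => (neg_neg _).symm
  rw [this]
  exact (Homeomorph.neg ℝ).isClosedEmbedding.comp
    (isClosed_Iic.isClosedEmbedding_subtypeVal.comp e.toHomeomorph.isClosedEmbedding)

section

variable {d : ℕ}

noncomputable def tropChart (a : Fin d → ℝ) (x : Fin d → WithTop ℝ) : Fin d → ℝ :=
  fun i => tropExp (a i)⁻¹ (x i)

def orthantBoundary (d : ℕ) : Set (Fin d → ℝ) := {v | 0 ≤ v ∧ v ≠ 0 ∧ ∃ i, v i = 0}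

lemma tropChart_mem_orthantBoundary_iff (a : Fin d → ℝ) {x : Fin d → WithTop ℝ} :
    tropChart a x ∈ orthantBoundary d ↔ (x ≠ fun _ => ⊤) ∧ ∃ i, x i = ⊤ := by
  simp [orthantBoundary, tropChart, funext_iff, Pi.le_def, tropExp_nonneg]

lemma tropChart_translate {a : Fin d → ℝ} (ha : ∀ i, a i ≠ 0) (x : Fin d → WithTop ℝ) (s : ℝ) :
    tropChart a (fun k => x k + ↑(s * a k)) = exp (-s) • tropChart a x := by
  ext i
  rw [Pi.smul_apply, smul_eq_mul, tropChart, tropChart, tropExp_add_coe, inv_mul_eq_div,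
    mul_div_cancel_right₀ _ (ha i)]

lemma isClosedEmbedding_tropChart {a : Fin d → ℝ} (ha : ∀ i, 0 < a i) :
    IsClosedEmbedding (tropChart a) :=
  IsClosedEmbedding.piMap fun i => isClosedEmbedding_tropExp (inv_pos.2 (ha i))

lemma exists_tropChart_eq {a : Fin d → ℝ} (ha : ∀ i, a i ≠ 0) {v : Fin d → ℝ} (hv : 0 ≤ v) :
    ∃ x, tropChart a x = v := by
  choose x hx using fun i => exists_tropExp_eq (inv_ne_zero (ha i)) (hv i)
  exact ⟨x, funext hx⟩

lemma exists_tropChart_eq_exp_smul_iff {a : Fin d → ℝ} (ha : ∀ i, 0 < a i)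
    {x y : Fin d → WithTop ℝ} :
    (∃ n : ℤ, tropChart a y = exp n • tropChart a x) ↔
      ∃ n : ℤ, ∀ k, y k = x k + ↑(n * a k) := by
  refine (Equiv.neg ℤ).exists_congr fun n => ?_
  rw [← funext_iff, ← (isClosedEmbedding_tropChart ha).injective.eq_iff,
    tropChart_translate fun i => (ha i).ne']
  simp

lemma sum_pos_of_mem_orthantBoundary {v : Fin d → ℝ} (hv : v ∈ orthantBoundary d) :
    0 < ∑ i, v i :=
  Fintype.sum_pos (lt_of_le_of_ne hv.1 (Ne.symm hv.2.1))

lemma isCompact_orthantBoundary_inter_sum_mem_Icc {m M : ℝ} (hm : 0 < m) :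
    IsCompact (orthantBoundary d ∩ {v | ∑ i, v i ∈ Icc m M}) := by
  have hclosed : IsClosed ({v : Fin d → ℝ | 0 ≤ v} ∩ (⋃ i, {v | v i = 0}) ∩
      (fun v => ∑ i, v i) ⁻¹' Icc m M) :=
    ((isClosed_le continuous_const continuous_id).inter
      (isClosed_iUnion_of_finite fun i => isClosed_eq (continuous_apply i) continuous_const)).inter
      (isClosed_Icc.preimage (continuous_finsetSum _ fun i _ => continuous_apply i))
  refine (isCompact_Icc (a := 0) (b := fun _ => M)).of_isClosed_subset ?_ ?_
  · convert hclosed using 1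
    ext v
    simp only [orthantBoundary, mem_inter_iff, mem_iUnion, mem_preimage]
    constructor
    · rintro ⟨⟨h0, -, hi⟩, hsum⟩
      exact ⟨⟨h0, hi⟩, hsum⟩
    · rintro ⟨⟨h0, hi⟩, hsum⟩
      refine ⟨⟨h0, ?_, hi⟩, hsum⟩
      rintro rfl
      simp only [Pi.zero_apply, Finset.sum_const_zero, mem_Icc] at hsum
      linarith [hsum.1]
  · rintro v ⟨hv, hsum⟩
    exact ⟨hv.1, fun i => (Finset.single_le_sum (fun j _ => hv.1 j) (Finset.mem_univ i)).trans
      hsum.2⟩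

noncomputable def diagComplement (d : ℕ) : Submodule ℝ (EuclideanSpace ℝ (Fin d)) :=
  (ℝ ∙ WithLp.toLp 2 (1 : Fin d → ℝ))ᗮ

lemma finrank_diagComplement (d : ℕ) : Module.finrank ℝ (diagComplement d) = d - 1 := by
  have h := (ℝ ∙ WithLp.toLp 2 (1 : Fin d → ℝ)).finrank_add_finrank_orthogonal
  rw [finrank_euclideanSpace_fin] at h
  rcases Nat.eq_zero_or_pos d with rfl | hd
  · exact Nat.le_zero.1 ((diagComplement 0).finrank_le.trans_eq finrank_euclideanSpace_fin)
  · have : WithLp.toLp 2 (1 : Fin d → ℝ) ≠ 0 := fun h0 => by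
      simpa using congrFun (congrArg WithLp.ofLp h0) ⟨0, hd⟩
    rw [finrank_span_singleton this] at h
    exact Nat.eq_sub_of_add_eq' h

noncomputable def diagComplementIso (d : ℕ) :
    diagComplement d ≃ₗᵢ[ℝ] EuclideanSpace ℝ (Fin (d - 1)) :=
  ((stdOrthonormalBasis ℝ (diagComplement d)).reindex (finCongr (finrank_diagComplement d))).repr

noncomputable def projDiagComplement (d : ℕ) : (Fin d → ℝ) →L[ℝ] diagComplement d :=
  (diagComplement d).orthogonalProjectionOnto ∘L
    ((EuclideanSpace.equiv (Fin d) ℝ).symm : (Fin d → ℝ) →L[ℝ] EuclideanSpace ℝ (Fin d))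

lemma projDiagComplement_eq_zero_iff {v : Fin d → ℝ} :
    projDiagComplement d v = 0 ↔ ∃ c : ℝ, c • 1 = v := by
  rw [projDiagComplement, ContinuousLinearMap.comp_apply,
    Submodule.orthogonalProjectionOnto_eq_zero_iff, diagComplement,
    Submodule.orthogonal_orthogonal, Submodule.mem_span_singleton]
  refine exists_congr fun c => ?_
  rw [← WithLp.toLp_smul]
  exact (WithLp.toLp_injective 2).eq_iff

lemma projDiagComplement_ne_zero {v : Fin d → ℝ} (hv : v ∈ orthantBoundary d) :
    projDiagComplement d v ≠ 0 := by
  obtain ⟨-, hne, i, hi⟩ := hv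
  rintro h
  obtain ⟨c, rfl⟩ := projDiagComplement_eq_zero_iff.1 h
  obtain rfl : c = 0 := by simpa using hi
  exact hne (zero_smul _ _)

lemma eq_smul_of_projDiagComplement_eq_smul {v w : Fin d → ℝ} (hv : 0 ≤ v) (hw : 0 ≤ w)
    (hv₀ : ∃ i, v i = 0) (hw₀ : ∃ j, w j = 0) {s : ℝ} (hs : 0 ≤ s)
    (h : projDiagComplement d v = s • projDiagComplement d w) : v = s • w := by
  obtain ⟨c, hc⟩ := projDiagComplement_eq_zero_iff.1
    (by rw [map_sub, map_smul, h, sub_self] : projDiagComplement d (v - s • w) = 0)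
  obtain ⟨i, hi⟩ := hv₀
  obtain ⟨j, hj⟩ := hw₀
  have hci := congrFun hc i
  have hcj := congrFun hc j
  simp only [Pi.smul_apply, Pi.one_apply, smul_eq_mul, mul_one, Pi.sub_apply, hi, hj] at hci hcj
  obtain rfl : c = 0 :=
    le_antisymm (by linarith [mul_nonneg hs (hw i)]) (by linarith [show 0 ≤ v j from hv j])
  rwa [zero_smul, eq_comm, sub_eq_zero] at hc

noncomputable def sphereDir (v : Fin d → ℝ) : diagComplement d :=
  ‖projDiagComplement d v‖⁻¹ • projDiagComplement d v

lemma sphereDir_smul {s : ℝ} (hs : 0 < s) (v : Fin d → ℝ) : sphereDir (s • v) = sphereDir v := by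
  rw [sphereDir, sphereDir, map_smul, norm_smul, norm_of_nonneg hs.le, smul_smul, mul_inv,
    mul_right_comm, inv_mul_cancel₀ hs.ne', one_mul]

lemma exists_pos_eq_smul_of_sphereDir_eq {v w : Fin d → ℝ} (hv : v ∈ orthantBoundary d)
    (hw : w ∈ orthantBoundary d) (h : sphereDir v = sphereDir w) : ∃ s : ℝ, 0 < s ∧ v = s • w := by
  have hPv := norm_pos_iff.2 (projDiagComplement_ne_zero hv)
  have hPw := norm_pos_iff.2 (projDiagComplement_ne_zero hw)
  refine ⟨‖projDiagComplement d v‖ / ‖projDiagComplement d w‖, div_pos hPv hPw,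
    eq_smul_of_projDiagComplement_eq_smul hv.1 hw.1 hv.2.2 hw.2.2 (div_pos hPv hPw).le ?_⟩
  calc projDiagComplement d v = ‖projDiagComplement d v‖ • sphereDir v := by
        rw [sphereDir, smul_smul, mul_inv_cancel₀ hPv.ne', one_smul]
    _ = ‖projDiagComplement d v‖ • sphereDir w := by rw [h]
    _ = _ := by rw [sphereDir, smul_smul, div_eq_mul_inv]

lemma exists_sphereDir_eq {w : diagComplement d} (hw : ‖w‖ = 1) :
    ∃ v ∈ orthantBoundary d, sphereDir v = w := by
  have hw0 : w ≠ 0 := by rintro rfl; simp at hw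
  have : Nonempty (Fin d) := by
    by_contra h
    rw [not_nonempty_iff] at h
    exact hw0 (Subtype.ext (WithLp.ofLp_injective 2 (funext fun i => isEmptyElim i)))
  obtain ⟨j, -, hj⟩ := Finset.exists_min_image Finset.univ
    (fun i => (w : EuclideanSpace ℝ (Fin d)) i) Finset.univ_nonempty
  -- subtracting the smallest coordinate moves `w` along the diagonal onto the orthant boundary
  set v : Fin d → ℝ :=
    WithLp.ofLp (w : EuclideanSpace ℝ (Fin d)) + (-(w : EuclideanSpace ℝ (Fin d)) j) • 1
  have hPv : projDiagComplement d v = w := by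
    rw [map_add, projDiagComplement_eq_zero_iff.2 ⟨_, rfl⟩, add_zero]
    exact Submodule.orthogonalProjectionOnto_mem_subspace_eq_self w
  refine ⟨v, ⟨fun i => ?_, fun h0 => hw0 ?_, j, ?_⟩, ?_⟩
  · simpa [v] using hj i (Finset.mem_univ i)
  · rw [← hPv, h0, map_zero]
  · simp [v]
  · rw [sphereDir, hPv, hw, inv_one, one_smul]

noncomputable def hopfCoord (v : orthantBoundary d) :
    Circle × Metric.sphere (0 : EuclideanSpace ℝ (Fin (d - 1))) 1 :=
  (Circle.exp (2 * π * log (∑ i, (v : Fin d → ℝ) i)),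
    ⟨diagComplementIso d (sphereDir v), by
      rw [mem_sphere_zero_iff_norm, LinearIsometryEquiv.norm_map, sphereDir, norm_smul, norm_inv,
        norm_norm, inv_mul_cancel₀ (norm_ne_zero_iff.2 (projDiagComplement_ne_zero v.2))]⟩)

lemma continuous_hopfCoord : Continuous (hopfCoord (d := d)) := by
  have hsum : Continuous fun v : orthantBoundary d => ∑ i, (v : Fin d → ℝ) i :=
    continuous_finsetSum _ fun i _ => (continuous_apply i).comp continuous_subtype_val
  have hP : Continuous fun v : orthantBoundary d => projDiagComplement d v :=
    (projDiagComplement d).continuous.comp continuous_subtype_val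
  refine (Circle.exp.continuous.comp (continuous_const.mul
    (hsum.log fun v => (sum_pos_of_mem_orthantBoundary v.2).ne'))).prodMk ?_
  exact ((diagComplementIso d).continuous.comp ((hP.norm.inv₀ fun v =>
    norm_ne_zero_iff.2 (projDiagComplement_ne_zero v.2)).smul hP)).subtype_mk _

lemma hopfCoord_eq_iff {v w : orthantBoundary d} :
    hopfCoord v = hopfCoord w ↔ ∃ n : ℤ, (w : Fin d → ℝ) = exp n • (v : Fin d → ℝ) := by
  have hv := sum_pos_of_mem_orthantBoundary v.2
  have sum_smul (s : ℝ) : ∑ i, (s • (v : Fin d → ℝ)) i = s * ∑ i, (v : Fin d → ℝ) i := by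
    simp [Finset.mul_sum]
  constructor
  · intro h
    obtain ⟨hcirc, hsph⟩ := Prod.ext_iff.1 h
    obtain ⟨s, hs, hws⟩ := exists_pos_eq_smul_of_sphereDir_eq w.2 v.2
      ((diagComplementIso d).injective (Subtype.ext_iff.1 hsph)).symm
    obtain ⟨m, hm⟩ := Circle.exp_eq_exp.1 hcirc
    rw [hws, sum_smul, log_mul hs.ne' hv.ne'] at hm
    have hlog : 2 * π * (log s + m) = 0 := by linarith
    have hlog' : log s = -m := by
      linarith [(mul_eq_zero.1 hlog).resolve_left (by positivity)]
    exact ⟨-m, by rw [hws, Int.cast_neg, ← hlog', exp_log hs]⟩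
  · rintro ⟨n, hn⟩
    refine Prod.ext (Circle.exp_eq_exp.2 ⟨-n, ?_⟩) (Subtype.ext ?_)
    · rw [hn, sum_smul, log_mul (exp_ne_zero _) hv.ne', log_exp]
      push_cast
      ring
    · simp only [hopfCoord]
      rw [hn, sphereDir_smul (exp_pos _)]

lemma surjOn_hopfCoord :
    SurjOn hopfCoord {v : orthantBoundary d | ∑ i, (v : Fin d → ℝ) i ∈ Icc (exp (-1)) (exp 1)}
      univ := by
  rintro ⟨z, q⟩ -
  obtain ⟨u, hu, hdir⟩ := exists_sphereDir_eq (w := (diagComplementIso d).symm q) (by simp)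
  have hu0 := sum_pos_of_mem_orthantBoundary hu
  set t := Complex.arg z / (2 * π)
  have hs : 0 < exp t / ∑ i, u i := div_pos (exp_pos t) hu0
  have hv : (exp t / ∑ i, u i) • u ∈ orthantBoundary d :=
    ⟨smul_nonneg hs.le hu.1, smul_ne_zero hs.ne' hu.2.1, hu.2.2.imp fun i hi => by simp [hi]⟩
  have hsum : ∑ i, ((exp t / ∑ i, u i) • u) i = exp t := by
    simp [← Finset.mul_sum, div_mul_cancel₀ _ hu0.ne']
  have ht : t ∈ Icc (-1) 1 := by
    have := Complex.neg_pi_lt_arg z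
    have := Complex.arg_le_pi z
    constructor
    · rw [le_div_iff₀ (by positivity)]; linarith [pi_pos]
    · rw [div_le_one (by positivity)]; linarith [pi_pos]
  refine ⟨⟨_, hv⟩, ?_, ?_⟩
  · show _ ∈ Icc _ _
    rw [hsum]
    exact ⟨exp_le_exp.2 ht.1, exp_le_exp.2 ht.2⟩
  · refine Prod.ext ?_ (Subtype.ext ?_)
    · simp only [hopfCoord, hsum, log_exp]
      rw [mul_div_cancel₀ _ (by positivity)]
      exact Circle.exp_arg z
    · simp only [hopfCoord]
      rw [sphereDir_smul hs, hdir, LinearIsometryEquiv.apply_symm_apply]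

end

theorem diagonal_hopf_boundary_homeo_circle_sphere_general {d : ℕ}
    (a : Fin d → ℝ) (ha : ∀ k, 0 < a k)
    (B : Set (Fin d → WithTop ℝ))
    (hB : B = {x | (x ≠ fun _ => ⊤) ∧ ∃ i, x i = ⊤})
    (r : Setoid B)
    (hr : ∀ x y : B, r.r x y ↔ ∃ n : ℤ, ∀ k,
      (y : Fin d → WithTop ℝ) k = (x : Fin d → WithTop ℝ) k + (((n : ℝ) * a k : ℝ) : WithTop ℝ)) :
    Nonempty (Quotient r ≃ₜ
      Circle × (Metric.sphere (0 : EuclideanSpace ℝ (Fin (d - 1))) 1)) := by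
  subst hB
  have hV (x : {x : Fin d → WithTop ℝ | (x ≠ fun _ => ⊤) ∧ ∃ i, x i = ⊤}) :
      tropChart a x ∈ orthantBoundary d := (tropChart_mem_orthantBoundary_iff a).2 x.2
  let C := orthantBoundary d ∩ {v | ∑ i, v i ∈ Icc (exp (-1)) (exp 1)}
  refine Quotient.nonempty_homeomorph_of_isCompact_image_eq_univ r
    (f := fun x => hopfCoord ⟨tropChart a x, hV x⟩) (K := Subtype.val ⁻¹' (tropChart a ⁻¹' C))
    ?_ (fun x y => ?_) ?_ ?_
  · exact continuous_hopfCoord.comp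
      (((isClosedEmbedding_tropChart ha).continuous.comp continuous_subtype_val).subtype_mk _)
  · rw [hopfCoord_eq_iff, hr]
    exact exists_tropChart_eq_exp_smul_iff ha
  · refine (IsInducing.subtypeVal.isCompact_preimage_iff fun x hx => ?_).2
      ((isClosedEmbedding_tropChart ha).isCompact_preimage
        (isCompact_orthantBoundary_inter_sum_mem_Icc (exp_pos _)))
    rw [Subtype.range_coe]
    exact (tropChart_mem_orthantBoundary_iff a).1 hx.1
  · refine eq_univ_of_forall fun p => ?_
    obtain ⟨v, hvC, rfl⟩ := surjOn_hopfCoord (mem_univ p)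
    obtain ⟨x, hx⟩ := exists_tropChart_eq (fun i => (ha i).ne') v.2.1
    refine ⟨⟨x, (tropChart_mem_orthantBoundary_iff a).1 (hx ▸ v.2)⟩, ?_, ?_⟩
    · show tropChart a x ∈ C
      rw [hx]
      exact ⟨v.2, hvC⟩
    · exact congrArg hopfCoord (Subtype.ext hx)

/-- For `d ≥ 2` and a vector `a ∈ ℝ^d` with strictly positive coordinates,
let `B` be the boundary of `𝕋^d ∖ {∞}`, i.e. the set of points `x ≠ ∞` having at least one
coordinate equal to `∞`; `B` is invariant under translation by `a`. Then the quotient `B/ℤ`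
by the action `n·x = x + n·a` — the boundary `∂S` of the diagonal tropical Hopf manifold — is
homeomorphic to `S¹ × S^{d−2}`, the product of the circle with the `(d−2)`-dimensional sphere
(the unit sphere of `ℝ^{d−1}`). -/
theorem diagonal_hopf_boundary_homeo_circle_sphere {d : ℕ} (hd : 2 ≤ d)
    (a : Fin d → ℝ) (ha : ∀ k, 0 < a k)
    (B : Set (Fin d → WithTop ℝ))
    (hB : B = {x | (x ≠ fun _ => ⊤) ∧ ∃ i, x i = ⊤})
    (r : Setoid B)
    (hr : ∀ x y : B, r.r x y ↔ ∃ n : ℤ, ∀ k,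
      (y : Fin d → WithTop ℝ) k = (x : Fin d → WithTop ℝ) k + (((n : ℝ) * a k : ℝ) : WithTop ℝ)) :
    Nonempty (Quotient r ≃ₜ
      Circle × (Metric.sphere (0 : EuclideanSpace ℝ (Fin (d - 1))) 1)) :=
  diagonal_hopf_boundary_homeo_circle_sphere_general a ha B hB r hr
end
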